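/- arXiv:1701.08836 — 4 statements merged into one kernel-verified Lean document; each statement's English description precedes it below -/
import Mathlib

section
/- For every ρ > 0, the quantity Q(ρ) = ∫_{−1}^{1} (1−x)^a (1+x)^b log₂(1 + ρ(1−x)/2) · P_r^{a,b}(x) · P_{r-2}^{a+1,b+1}(x) dx satisfies Q(ρ) ≤ 0. -/
open scoped BigOperators

/-- The Jacobi polynomial `P_n^{a,b}` (nonnegative integer parameters), via the
standard closed form `P_n^{a,b}(x) = ∑_{s=0}^n C(n+a, n-s) C(n+b, s)
((x-1)/2)^s ((x+1)/2)^{n-s}`; these are orthogonal on [-1,1] for the weight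
`(1-x)^a (1+x)^b` and normalized so that `P_n^{a,b}(1) = C(n+a, n)`. -/
noncomputable def jacobiP (a b n : ℕ) (x : ℝ) : ℝ :=
  ∑ s ∈ Finset.range (n + 1),
    (Nat.choose (n + a) (n - s) : ℝ) * (Nat.choose (n + b) s : ℝ) *
      ((x - 1) / 2) ^ s * ((x + 1) / 2) ^ (n - s)

/-- Squared L² norm of `P_n^{a,b}` for the weight `(1-x)^a (1+x)^b` on [-1,1]:
`‖P_n^{a,b}‖² = (2^{a+b+1}/(2n+a+b+1)) (n+a)!(n+b)! / ((n+a+b)! n!)`. -/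
noncomputable def jacobiNormSq (a b n : ℕ) : ℝ :=
  (2 : ℝ) ^ (a + b + 1) / (2 * (n : ℝ) + (a : ℝ) + (b : ℝ) + 1) *
    ((Nat.factorial (n + a) : ℝ) * (Nat.factorial (n + b) : ℝ)) /
    ((Nat.factorial (n + a + b) : ℝ) * (Nat.factorial n : ℝ))

/-- `M_r^{a,b} = (r+a+b+1)! r! / (2^{a+b+1} (r+a-1)! (r+b-1)! (2r+a+b))`. -/
noncomputable def Mconst (a b r : ℕ) : ℝ :=
  ((Nat.factorial (r + a + b + 1) : ℝ) * (Nat.factorial r : ℝ)) /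
    ((2 : ℝ) ^ (a + b + 1) * (Nat.factorial (r + a - 1) : ℝ) *
      (Nat.factorial (r + b - 1) : ℝ) * (2 * (r : ℝ) + (a : ℝ) + (b : ℝ)))

/-- `N_r^{a,b} = (r+a+b)/(r+a+b+1)`. -/
noncomputable def Nconst (a b r : ℕ) : ℝ :=
  ((r : ℝ) + (a : ℝ) + (b : ℝ)) / ((r : ℝ) + (a : ℝ) + (b : ℝ) + 1)

/-- The ergodic capacity of the Jacobi MIMO channel at SNR `ρ` (case
`m_r + m_t ≤ m`, with `a = |m_r - m_t|`, `b = m - m_r - m_t`, `r = min(m_r, m_t)`):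
`C(ρ) = ∫_{-1}^1 (1-x)^a (1+x)^b log₂(1+ρ(1-x)/2) ∑_{k<r} P_k^{a,b}(x)²/‖P_k^{a,b}‖² dx`. -/
noncomputable def capC (a b r : ℕ) (ρ : ℝ) : ℝ :=
  ∫ x in (-1 : ℝ)..1,
    (1 - x) ^ a * (1 + x) ^ b * Real.logb 2 (1 + ρ * (1 - x) / 2) *
      ∑ k ∈ Finset.range r, (jacobiP a b k x) ^ 2 / jacobiNormSq a b k

namespace QAux
open Polynomial

noncomputable def Jp (a b n : ℕ) : Polynomial ℝ :=
  ∑ s ∈ Finset.range (n + 1),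
    C (((n + a).choose (n - s) : ℝ) * ((n + b).choose s : ℝ) / 2 ^ n) *
      (X - C 1) ^ s * (X + C 1) ^ (n - s)

noncomputable def Fp (a b n : ℕ) : Polynomial ℝ :=
  (X - C 1) ^ (n + a) * (X + C 1) ^ (n + b)

lemma nat_coeff_id (a b n k : ℕ) (hk : k ≤ n) :
    n.choose k * (n + a).descFactorial (n - k) * (n + b).descFactorial k
      = n.factorial * ((n + a).choose (n - k) * (n + b).choose k) := by
  rw [Nat.descFactorial_eq_factorial_mul_choose, Nat.descFactorial_eq_factorial_mul_choose]
  have h := Nat.choose_mul_factorial_mul_factorial hk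
  rw [← h]; ring

lemma rodrigues (a b n : ℕ) :
    derivative^[n] (Fp a b n) =
      C ((2 : ℝ) ^ n * (n.factorial : ℝ)) * ((X - C 1) ^ a * (X + C 1) ^ b * Jp a b n) := by
  rw [Fp, Polynomial.iterate_derivative_mul]
  rw [Jp, Finset.mul_sum, Finset.mul_sum]
  refine Finset.sum_congr rfl fun k hk => ?_
  have hkn : k ≤ n := Nat.lt_succ_iff.mp (Finset.mem_range.mp hk)
  rw [Polynomial.iterate_derivative_X_sub_pow, Polynomial.iterate_derivative_X_add_pow]
  have e1 : n + a - (n - k) = a + k := by omega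
  have e2 : n + b - k = b + (n - k) := by omega
  rw [e1, e2]
  have key : ((n.choose k * (n + a).descFactorial (n - k) * (n + b).descFactorial k : ℕ) : ℝ)
      = ((2:ℝ)^n * (n.factorial : ℝ)) *
        (((n + a).choose (n - k) : ℝ) * ((n + b).choose k : ℝ) / 2 ^ n) := by
    rw [nat_coeff_id a b n k hkn]
    push_cast
    field_simp
  simp only [smul_mul_assoc, mul_smul_comm, smul_smul]
  rw [show n.choose k * ((n + b).descFactorial k * (n + a).descFactorial (n - k))
      = n.choose k * (n + a).descFactorial (n - k) * (n + b).descFactorial k by ring]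
  rw [← Nat.cast_smul_eq_nsmul ℝ, smul_eq_C_mul, key, C_mul, pow_add, pow_add]
  ring

lemma Jp_eval' (a b n : ℕ) (x : ℝ) : (Jp a b n).eval x = jacobiP a b n x := by
  unfold Jp jacobiP
  rw [eval_finset_sum]
  refine Finset.sum_congr rfl fun s hs => ?_
  have hsn : s ≤ n := Nat.lt_succ_iff.mp (Finset.mem_range.mp hs)
  simp only [eval_mul, eval_pow, eval_C, eval_sub, eval_add, eval_X]
  rw [div_pow, div_pow]
  have h2 : (2:ℝ)^s * 2^(n-s) = 2^n := by
    rw [← pow_add]; congr 1; omega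
  rw [← h2]
  ring

lemma w_mul_jacobi (a b n : ℕ) (x : ℝ) :
    (1 - x) ^ a * (1 + x) ^ b * jacobiP a b n x
      = (-1:ℝ)^a / ((2:ℝ)^n * (n.factorial : ℝ)) * (derivative^[n] (Fp a b n)).eval x := by
  rw [rodrigues]
  simp only [eval_mul, eval_C, eval_pow, eval_sub, eval_add, eval_X, Jp_eval']
  have h1 : ((1:ℝ) - x)^a = (-1:ℝ)^a * (x-1)^a := by
    rw [show (1:ℝ) - x = -(x-1) by ring, neg_pow]
  have h2 : ((2:ℝ)^n * (n.factorial : ℝ)) ≠ 0 := by positivity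
  rw [h1]
  field_simp
  ring

lemma Fp_vanish (a b n j : ℕ) (hj : j < n) :
    (derivative^[j] (Fp a b n)).eval 1 = 0 ∧ (derivative^[j] (Fp a b n)).eval (-1) = 0 := by
  constructor
  · have h : (X - C (1:ℝ)) ^ (n + a - j) ∣ derivative^[j] (Fp a b n) :=
      pow_sub_dvd_iterate_derivative_of_pow_dvd j (Dvd.intro _ rfl)
    obtain ⟨c, hc⟩ := h
    rw [hc]
    simp only [eval_mul, eval_pow, eval_sub, eval_C, eval_X, sub_self]
    rw [zero_pow (by omega), zero_mul]
  · have h : (X + C (1:ℝ)) ^ (n + b - j) ∣ derivative^[j] (Fp a b n) :=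
      pow_sub_dvd_iterate_derivative_of_pow_dvd j (Dvd.intro_left _ rfl)
    obtain ⟨c, hc⟩ := h
    rw [hc]
    simp only [eval_mul, eval_pow, eval_add, eval_C, eval_X]
    rw [show (-1:ℝ) + 1 = 0 by ring, zero_pow (by omega), zero_mul]

lemma ibp_one (p : Polynomial ℝ) (g g' : ℝ → ℝ)
    (hg : ∀ x ∈ Set.uIcc (-1:ℝ) 1, HasDerivAt g (g' x) x)
    (hg'c : ContinuousOn g' (Set.uIcc (-1:ℝ) 1))
    (h1 : p.eval 1 = 0) (h2 : p.eval (-1) = 0) :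
    ∫ x in (-1:ℝ)..1, (derivative p).eval x * g x
      = - ∫ x in (-1:ℝ)..1, p.eval x * g' x := by
  have h := intervalIntegral.integral_mul_deriv_eq_deriv_mul
    (u := fun x => p.eval x) (u' := fun x => (derivative p).eval x)
    (v := g) (v' := g') (a := (-1:ℝ)) (b := 1)
    (fun x _ => p.hasDerivAt x) hg
    ((p.derivative.continuous_aeval.intervalIntegrable _ _))
    (hg'c.intervalIntegrable)
  rw [h1, h2] at h
  simp only [zero_mul, sub_zero, zero_sub] at h
  linarith [h]

lemma ibp_iter (m : ℕ) (p : Polynomial ℝ) (g : ℕ → ℝ → ℝ)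
    (hg : ∀ k, ∀ x ∈ Set.uIcc (-1:ℝ) 1, HasDerivAt (g k) (g (k+1) x) x)
    (hgc : ∀ k, ContinuousOn (g k) (Set.uIcc (-1:ℝ) 1))
    (hvan : ∀ j, j < m →
      (derivative^[j] p).eval 1 = 0 ∧ (derivative^[j] p).eval (-1) = 0) :
    ∫ x in (-1:ℝ)..1, (derivative^[m] p).eval x * g 0 x
      = (-1:ℝ)^m * ∫ x in (-1:ℝ)..1, p.eval x * g m x := by
  induction m generalizing g with
  | zero => simp
  | succ m ih =>
    have step : ∫ x in (-1:ℝ)..1, (derivative^[m+1] p).eval x * g 0 x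
        = - ∫ x in (-1:ℝ)..1, (derivative^[m] p).eval x * g 1 x := by
      rw [Function.iterate_succ_apply']
      exact ibp_one _ _ _ (hg 0) (hgc 1) (hvan m (by omega)).1 (hvan m (by omega)).2
    rw [step, ih (fun k => g (k+1)) (fun k => hg (k+1)) (fun k => hgc (k+1))
      (fun j hj => hvan j (by omega))]
    rw [pow_succ]
    ring

lemma orth (a b n : ℕ) (q : Polynomial ℝ) (hq : q.natDegree < n) :
    ∫ x in (-1:ℝ)..1, (derivative^[n] (Fp a b n)).eval x * q.eval x = 0 := by
  have h := ibp_iter n (Fp a b n) (fun k x => (derivative^[k] q).eval x)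
    (fun k x _ => by
      simpa [Function.iterate_succ_apply'] using (derivative^[k] q).hasDerivAt x)
    (fun k => ((derivative^[k] q).continuous_aeval).continuousOn)
    (fun j hj => Fp_vanish a b n j hj)
  simp only [Function.iterate_zero, id_eq] at h
  rw [h, Polynomial.iterate_derivative_eq_zero hq]
  simp

lemma hasDerivAt_invpow (z : ℝ) (k : ℕ) {x : ℝ} (hx : z - x ≠ 0) :
    HasDerivAt (fun x => (k.factorial : ℝ) * ((z - x) ^ (k+1))⁻¹)
      (((k+1).factorial : ℝ) * ((z - x) ^ (k+2))⁻¹) x := by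
  have h0 : HasDerivAt (fun x : ℝ => z - x) (-1) x := (hasDerivAt_id x).const_sub z
  have h1 : HasDerivAt (fun x : ℝ => (z - x) ^ (k+1))
      (((k+1 : ℕ) : ℝ) * (z - x) ^ k * (-1)) x := by
    exact (h0.pow (k+1)).congr_deriv (by simp)
  have h2 := (h1.inv (pow_ne_zero _ hx)).const_mul (k.factorial : ℝ)
  refine h2.congr_deriv ?_
  have hp : ((z-x)^(k+1))^2 = (z-x)^(k+2) * (z-x)^k := by
    rw [← pow_mul, ← pow_add]; congr 1; ring
  rw [hp, Nat.factorial_succ]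
  push_cast
  field_simp

lemma inv_integral (a b n : ℕ) {z : ℝ} (hz : 1 < z) :
    ∫ x in (-1:ℝ)..1, (derivative^[n] (Fp a b n)).eval x * (z - x)⁻¹
      = (-1:ℝ)^n * ∫ x in (-1:ℝ)..1,
          (Fp a b n).eval x * ((n.factorial : ℝ) * ((z - x) ^ (n+1))⁻¹) := by
  have hne : ∀ x ∈ Set.uIcc (-1:ℝ) 1, z - x ≠ 0 := by
    intro x hx
    rw [Set.uIcc_of_le (by norm_num : (-1:ℝ) ≤ 1)] at hx
    have := hx.2
    intro h
    nlinarith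
  have h := ibp_iter n (Fp a b n) (fun k x => (k.factorial : ℝ) * ((z - x) ^ (k+1))⁻¹)
    (fun k x hx => hasDerivAt_invpow z k (hne x hx))
    (fun k => continuousOn_const.mul
      (((continuous_const.sub continuous_id).pow _).continuousOn.inv₀
        (fun x hx => pow_ne_zero _ (hne x hx))))
    (fun j hj => Fp_vanish a b n j hj)
  simp only [Nat.factorial_zero, Nat.cast_one, one_mul, zero_add, pow_one] at h
  exact h

lemma Jp_natDegree_le' (a b n : ℕ) : (Jp a b n).natDegree ≤ n := by
  refine Polynomial.natDegree_sum_le_of_forall_le _ _ fun s hs => ?_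
  have hsn : s ≤ n := Nat.lt_succ_iff.mp (Finset.mem_range.mp hs)
  calc (C (((n + a).choose (n - s) : ℝ) * ((n + b).choose s : ℝ) / 2 ^ n) *
      (X - C 1) ^ s * (X + C 1) ^ (n - s)).natDegree
      ≤ (C (((n + a).choose (n - s) : ℝ) * ((n + b).choose s : ℝ) / 2 ^ n) *
      (X - C 1) ^ s).natDegree + ((X + C (1:ℝ)) ^ (n - s)).natDegree := natDegree_mul_le
    _ ≤ ((C (((n + a).choose (n - s) : ℝ) * ((n + b).choose s : ℝ) / 2 ^ n)).natDegree
        + ((X - C (1:ℝ)) ^ s).natDegree) + ((X + C (1:ℝ)) ^ (n - s)).natDegree := by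
        gcongr; exact natDegree_mul_le
    _ ≤ (0 + s) + (n - s) := by
        gcongr
        · exact le_of_eq (natDegree_C _)
        · exact le_of_eq (by rw [natDegree_pow, natDegree_X_sub_C, mul_one])
        · exact le_of_eq (by rw [natDegree_pow, natDegree_X_add_C, mul_one])
    _ ≤ n := by omega

lemma Jp_eval_nonneg' (a b n : ℕ) {z : ℝ} (hz : 1 ≤ z) : 0 ≤ (Jp a b n).eval z := by
  rw [Jp, eval_finset_sum]
  refine Finset.sum_nonneg fun s hs => ?_
  simp only [eval_mul, eval_pow, eval_C, eval_sub, eval_add, eval_X]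
  have h1 : (0:ℝ) ≤ z - 1 := by linarith
  have h2 : (0:ℝ) ≤ z + 1 := by linarith
  positivity

lemma Kinv_nonneg (a b r : ℕ) (hr : 2 ≤ r) {z : ℝ} (hz : 1 < z) :
    0 ≤ ∫ x in (-1:ℝ)..1,
        ((1-x)^a * (1+x)^b * jacobiP a b r x * jacobiP (a+1) (b+1) (r-2) x) * (z-x)⁻¹ := by
  set q : Polynomial ℝ := Jp (a+1) (b+1) (r-2) with hq
  set E : ℝ → ℝ := fun x => (derivative^[r] (Fp a b r)).eval x with hE
  set c : ℝ := (-1:ℝ)^a / ((2:ℝ)^r * (r.factorial : ℝ)) with hc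
  obtain ⟨D, hD⟩ : ∃ D, q - C (q.eval z) = (X - C z) * D :=
    (X_sub_C_dvd_sub_C_eval (a := z) (p := q))
  have hDdeg : D.natDegree < r := by
    by_cases hD0 : D = 0
    · rw [hD0, natDegree_zero]; omega
    · have h1 : ((X - C z) * D).natDegree = 1 + D.natDegree := by
        rw [natDegree_mul (X_sub_C_ne_zero z) hD0, natDegree_X_sub_C]
      have h2 : (q - C (q.eval z)).natDegree ≤ r - 2 := by
        refine le_trans (natDegree_sub_le _ _) ?_
        simp only [natDegree_C, max_le_iff]
        exact ⟨Jp_natDegree_le' _ _ _, by omega⟩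
      rw [← hD] at h1
      omega
  have hne : ∀ x ∈ Set.uIcc (-1:ℝ) 1, z - x ≠ 0 := by
    intro x hx
    rw [Set.uIcc_of_le (by norm_num : (-1:ℝ) ≤ 1)] at hx
    have := hx.2
    intro h; nlinarith
  have hKx : ∀ x ∈ Set.uIcc (-1:ℝ) 1,
      ((1-x)^a * (1+x)^b * jacobiP a b r x * jacobiP (a+1) (b+1) (r-2) x) * (z-x)⁻¹
        = c * q.eval z * (E x * (z-x)⁻¹) - c * (E x * D.eval x) := by
    intro x hx
    have h1 : (1-x)^a * (1+x)^b * jacobiP a b r x = c * E x := w_mul_jacobi a b r x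
    have h2 : jacobiP (a+1) (b+1) (r-2) x = q.eval x := (Jp_eval' _ _ _ _).symm
    have h3 : q.eval x - q.eval z = (x - z) * D.eval x := by
      have := congrArg (Polynomial.eval x) hD
      simpa using this
    have h4 : z - x ≠ 0 := hne x hx
    have h5 : q.eval x = q.eval z - (z - x) * D.eval x := by linarith [h3]
    calc ((1-x)^a * (1+x)^b * jacobiP a b r x * jacobiP (a+1) (b+1) (r-2) x) * (z-x)⁻¹
        = (c * E x) * (q.eval x * (z-x)⁻¹) := by rw [← h1, h2]; ring
      _ = (c * E x) * (q.eval z * (z-x)⁻¹ - D.eval x) := by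
          rw [h5]; field_simp
      _ = c * q.eval z * (E x * (z-x)⁻¹) - c * (E x * D.eval x) := by ring
  rw [intervalIntegral.integral_congr hKx]
  have hcontE : Continuous E := Polynomial.continuous_aeval _
  have hint1 : IntervalIntegrable (fun x => c * q.eval z * (E x * (z-x)⁻¹))
      MeasureTheory.volume (-1:ℝ) 1 := by
    apply ContinuousOn.intervalIntegrable
    exact (continuousOn_const.mul (hcontE.continuousOn.mul
      ((continuous_const.sub continuous_id).continuousOn.inv₀ hne)))
  have hint2 : IntervalIntegrable (fun x => c * (E x * D.eval x))
      MeasureTheory.volume (-1:ℝ) 1 :=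
    (continuous_const.mul (hcontE.mul D.continuous_aeval)).intervalIntegrable _ _
  rw [intervalIntegral.integral_sub hint1 hint2]
  have horth : ∫ x in (-1:ℝ)..1, c * (E x * D.eval x) = c * ∫ x in (-1:ℝ)..1, E x * D.eval x := by
    exact intervalIntegral.integral_const_mul _ _
  rw [horth, orth a b r D hDdeg, mul_zero, sub_zero]
  rw [intervalIntegral.integral_const_mul, inv_integral a b r hz]
  have hFpW : ∀ x : ℝ, (Fp a b r).eval x * ((r.factorial : ℝ) * ((z - x) ^ (r+1))⁻¹)
      = (-1:ℝ)^(r+a) * ((1-x)^(r+a) * (1+x)^(r+b) * ((r.factorial : ℝ) * ((z - x) ^ (r+1))⁻¹)) := by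
    intro x
    have : (Fp a b r).eval x = (-1:ℝ)^(r+a) * ((1-x)^(r+a) * (1+x)^(r+b)) := by
      rw [Fp]
      simp only [eval_mul, eval_pow, eval_sub, eval_add, eval_C, eval_X]
      rw [show x - 1 = -(1-x) by ring, neg_pow]
      ring_nf
    rw [this]; ring
  rw [intervalIntegral.integral_congr (fun x _ => hFpW x), intervalIntegral.integral_const_mul]
  set W : ℝ := ∫ x in (-1:ℝ)..1, (1-x)^(r+a) * (1+x)^(r+b) * ((r.factorial : ℝ) * ((z - x) ^ (r+1))⁻¹)
    with hW
  have hWpos : 0 ≤ W := by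
    apply intervalIntegral.integral_nonneg (by norm_num : (-1:ℝ) ≤ 1)
    intro u hu
    have h1 : (0:ℝ) ≤ 1 - u := by linarith [hu.2]
    have h2 : (0:ℝ) ≤ 1 + u := by linarith [hu.1]
    have h3 : (0:ℝ) < z - u := by linarith [hu.2]
    positivity
  have hsign : c * q.eval z * ((-1:ℝ)^r * ((-1:ℝ)^(r+a) * W))
      = q.eval z * W / ((2:ℝ)^r * (r.factorial : ℝ)) := by
    rw [hc]
    have : (-1:ℝ)^a * ((-1:ℝ)^r * (-1:ℝ)^(r+a)) = 1 := by
      rw [← pow_add, ← pow_add, show a+(r+(r+a)) = 2*(a+r) by ring, pow_mul, neg_one_sq, one_pow]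
    calc (-1:ℝ)^a / ((2:ℝ)^r * (r.factorial : ℝ)) * q.eval z * ((-1:ℝ)^r * ((-1:ℝ)^(r+a) * W))
        = ((-1:ℝ)^a * ((-1:ℝ)^r * (-1:ℝ)^(r+a))) * (q.eval z * W) / ((2:ℝ)^r * (r.factorial : ℝ)) := by
          ring
      _ = q.eval z * W / ((2:ℝ)^r * (r.factorial : ℝ)) := by rw [this, one_mul]
  rw [hsign]
  have hqz : 0 ≤ q.eval z := Jp_eval_nonneg' (a+1) (b+1) (r-2) hz.le
  positivity

lemma jacobiP_cont (a b n : ℕ) : Continuous (fun x => jacobiP a b n x) := by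
  have h : (fun x => jacobiP a b n x) = fun x => (Jp a b n).eval x := by
    funext x; rw [Jp_eval']
  rw [h]; exact Polynomial.continuous_aeval _

lemma Kcont (a b r : ℕ) :
    Continuous (fun x : ℝ =>
      (1-x)^a * (1+x)^b * jacobiP a b r x * jacobiP (a+1) (b+1) (r-2) x) := by
  exact ((((continuous_const.sub continuous_id).pow a).mul
    ((continuous_const.add continuous_id).pow b)).mul (jacobiP_cont a b r)).mul
    (jacobiP_cont (a+1) (b+1) (r-2))

lemma Kzero (a b r : ℕ) (hr : 2 ≤ r) :
    ∫ x in (-1:ℝ)..1,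
      (1-x)^a * (1+x)^b * jacobiP a b r x * jacobiP (a+1) (b+1) (r-2) x = 0 := by
  have hptw : ∀ x : ℝ,
      (1-x)^a * (1+x)^b * jacobiP a b r x * jacobiP (a+1) (b+1) (r-2) x
        = ((-1:ℝ)^a / ((2:ℝ)^r * (r.factorial : ℝ))) *
          ((derivative^[r] (Fp a b r)).eval x * (Jp (a+1) (b+1) (r-2)).eval x) := by
    intro x
    rw [show (1-x)^a * (1+x)^b * jacobiP a b r x * jacobiP (a+1) (b+1) (r-2) x
        = ((1-x)^a * (1+x)^b * jacobiP a b r x) * jacobiP (a+1) (b+1) (r-2) x by ring,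
      w_mul_jacobi a b r x, ← Jp_eval' (a+1) (b+1) (r-2) x]
    ring
  rw [intervalIntegral.integral_congr (fun x _ => hptw x),
    intervalIntegral.integral_const_mul]
  rw [orth a b r (Jp (a+1) (b+1) (r-2))
    (lt_of_le_of_lt (Jp_natDegree_le' _ _ _) (by omega)), mul_zero]

lemma Rnonpos (a b r : ℕ) (hr : 2 ≤ r) {u : ℝ} (hu : 0 < u) :
    ∫ x in (-1:ℝ)..1,
      ((1-x)^a * (1+x)^b * jacobiP a b r x * jacobiP (a+1) (b+1) (r-2) x) *
        ((1-x) / (2 + u*(1-x))) ≤ 0 := by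
  set z : ℝ := 1 + 2/u with hzdef
  have hz : 1 < z := by
    rw [hzdef]; have : 0 < 2/u := by positivity
    linarith
  have hptw : ∀ x ∈ Set.uIcc (-1:ℝ) 1,
      ((1-x)^a * (1+x)^b * jacobiP a b r x * jacobiP (a+1) (b+1) (r-2) x) *
        ((1-x) / (2 + u*(1-x)))
      = ((1-x)^a * (1+x)^b * jacobiP a b r x * jacobiP (a+1) (b+1) (r-2) x) * (1/u)
        - (2/u^2) * (((1-x)^a * (1+x)^b * jacobiP a b r x * jacobiP (a+1) (b+1) (r-2) x) *
            (z-x)⁻¹) := by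
    intro x hx
    rw [Set.uIcc_of_le (by norm_num : (-1:ℝ) ≤ 1)] at hx
    have hzx : 0 < z - x := by linarith [hx.2]
    have hden : 2 + u*(1-x) = u * (z - x) := by
      rw [hzdef]; field_simp; ring
    have hfrac : (1-x) / (2 + u*(1-x)) = 1/u - (2/u^2) * (z-x)⁻¹ := by
      have hpos : (0:ℝ) < 2 + u*(1-x) := by rw [hden]; positivity
      have h2 : (2:ℝ) + u*(1-x) ≠ 0 := ne_of_gt hpos
      have h3 : z - x ≠ 0 := ne_of_gt hzx
      rw [div_eq_iff h2, sub_mul, hden]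
      have e1 : 1/u*(u*(z-x)) = z - x := by
        field_simp
      have e2 : 2/u^2 * (z-x)⁻¹ * (u*(z-x)) = 2/u := by
        field_simp
      rw [e1, e2, hzdef]
      ring
    rw [hfrac]; ring
  rw [intervalIntegral.integral_congr hptw]
  have hne : ∀ x ∈ Set.uIcc (-1:ℝ) 1, z - x ≠ 0 := by
    intro x hx
    rw [Set.uIcc_of_le (by norm_num : (-1:ℝ) ≤ 1)] at hx
    intro h; nlinarith [hx.2]
  have hint1 : IntervalIntegrable
      (fun x => ((1-x)^a * (1+x)^b * jacobiP a b r x * jacobiP (a+1) (b+1) (r-2) x) * (1/u))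
      MeasureTheory.volume (-1:ℝ) 1 :=
    ((Kcont a b r).mul continuous_const).intervalIntegrable _ _
  have hint2 : IntervalIntegrable
      (fun x => (2/u^2) * (((1-x)^a * (1+x)^b * jacobiP a b r x *
        jacobiP (a+1) (b+1) (r-2) x) * (z-x)⁻¹)) MeasureTheory.volume (-1:ℝ) 1 := by
    apply ContinuousOn.intervalIntegrable
    exact continuousOn_const.mul ((Kcont a b r).continuousOn.mul
      ((continuous_const.sub continuous_id).continuousOn.inv₀ hne))
  rw [intervalIntegral.integral_sub hint1 hint2]
  rw [intervalIntegral.integral_mul_const, Kzero a b r hr, zero_mul,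
    intervalIntegral.integral_const_mul]
  have h1 : 0 ≤ (2/u^2) * ∫ x in (-1:ℝ)..1,
      ((1-x)^a * (1+x)^b * jacobiP a b r x * jacobiP (a+1) (b+1) (r-2) x) * (z-x)⁻¹ := by
    have := Kinv_nonneg a b r hr hz
    positivity
  linarith

theorem Q_nonpos' (a b r : ℕ) (hr : 2 ≤ r) :
    ∀ ρ : ℝ, 0 < ρ →
      (∫ x in (-1 : ℝ)..1,
          (1 - x) ^ a * (1 + x) ^ b * Real.logb 2 (1 + ρ * (1 - x) / 2) *
            jacobiP a b r x * jacobiP (a + 1) (b + 1) (r - 2) x) ≤ 0 := by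
  intro ρ hρ
  set K : ℝ → ℝ := fun x =>
    (1-x)^a * (1+x)^b * jacobiP a b r x * jacobiP (a+1) (b+1) (r-2) x with hK
  have hlog2 : (0:ℝ) < Real.log 2 := Real.log_pos (by norm_num)
  have step1 : (∫ x in (-1:ℝ)..1,
        (1 - x) ^ a * (1 + x) ^ b * Real.logb 2 (1 + ρ * (1 - x) / 2) *
          jacobiP a b r x * jacobiP (a + 1) (b + 1) (r - 2) x)
      = (Real.log 2)⁻¹ * ∫ x in (-1:ℝ)..1, K x * Real.log (1 + ρ * (1 - x) / 2) := by
    rw [← intervalIntegral.integral_const_mul]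
    apply intervalIntegral.integral_congr
    intro x _
    simp only [Real.logb, hK]
    ring
  rw [step1]
  have hlogrep : ∀ x ∈ Set.uIcc (-1:ℝ) 1,
      K x * Real.log (1 + ρ * (1 - x) / 2)
        = ∫ u in (0:ℝ)..ρ, K x * ((1-x)/(2+u*(1-x))) := by
    intro x hx
    rw [Set.uIcc_of_le (by norm_num : (-1:ℝ) ≤ 1)] at hx
    have h1x : (0:ℝ) ≤ 1 - x := by linarith [hx.2]
    have hden : ∀ u ∈ Set.uIcc (0:ℝ) ρ, (0:ℝ) < 2 + u*(1-x) := by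
      intro u hu
      rw [Set.uIcc_of_le hρ.le] at hu
      nlinarith [hu.1]
    have hder : ∀ u ∈ Set.uIcc (0:ℝ) ρ,
        HasDerivAt (fun v => Real.log (1 + v * (1 - x) / 2)) ((1-x)/(2+u*(1-x))) u := by
      intro u hu
      have hpos : (0:ℝ) < 2 + u*(1-x) := hden u hu
      have hin : HasDerivAt (fun v : ℝ => 1 + v * (1 - x) / 2) ((1-x)/2) u := by
        have h := ((hasDerivAt_id u).mul_const ((1 - x)/2)).const_add 1
        have heq : (fun v : ℝ => 1 + v * ((1-x)/2)) = fun v : ℝ => 1 + v * (1 - x) / 2 := by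
          funext v; ring
        simpa [heq] using h
      have hne : 1 + u * (1 - x) / 2 ≠ 0 := by nlinarith
      have h := hin.log hne
      convert h using 1
      rw [div_div]
      congr 1
      ring
    have hcont : ContinuousOn (fun u : ℝ => (1-x)/(2+u*(1-x))) (Set.uIcc 0 ρ) :=
      continuousOn_const.div
        (Continuous.continuousOn (by continuity))
        (fun u hu => (hden u hu).ne')
    have hFTC := intervalIntegral.integral_eq_sub_of_hasDerivAt hder
      hcont.intervalIntegrable
    rw [intervalIntegral.integral_const_mul, hFTC]
    norm_num
  rw [intervalIntegral.integral_congr hlogrep]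
  have hsetin : ∀ x : ℝ, (∫ u in (0:ℝ)..ρ, K x * ((1-x)/(2+u*(1-x))))
      = ∫ u in Set.Ioc (0:ℝ) ρ, K x * ((1-x)/(2+u*(1-x))) :=
    fun x => intervalIntegral.integral_of_le hρ.le
  rw [intervalIntegral.integral_of_le (by norm_num : (-1:ℝ) ≤ 1)]
  simp_rw [hsetin]
  have hcontProd : ContinuousOn
      (Function.uncurry fun x u => K x * ((1-x)/(2+u*(1-x))))
      ((Set.Icc (-1:ℝ) 1) ×ˢ (Set.Icc (0:ℝ) ρ)) := by
    apply ContinuousOn.mul ((Kcont a b r).comp continuous_fst).continuousOn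
    apply ContinuousOn.div
    · exact (continuous_const.sub continuous_fst).continuousOn
    · exact (continuous_const.add (continuous_snd.mul
        (continuous_const.sub continuous_fst))).continuousOn
    · rintro ⟨x, u⟩ hp
      rw [Set.mem_prod] at hp
      have h1 := hp.1.2
      have h2 := hp.2.1
      simp only []
      nlinarith
  have hInt : MeasureTheory.Integrable
      (Function.uncurry fun x u => K x * ((1-x)/(2+u*(1-x))))
      ((MeasureTheory.volume.restrict (Set.Ioc (-1:ℝ) 1)).prod
        (MeasureTheory.volume.restrict (Set.Ioc (0:ℝ) ρ))) := by
    rw [MeasureTheory.Measure.prod_restrict]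
    refine MeasureTheory.IntegrableOn.mono_set ?_
      (Set.prod_mono Set.Ioc_subset_Icc_self Set.Ioc_subset_Icc_self)
    exact hcontProd.integrableOn_compact (isCompact_Icc.prod isCompact_Icc)
  rw [MeasureTheory.integral_integral_swap hInt]
  have hfinal : (∫ u in Set.Ioc (0:ℝ) ρ,
      ∫ x in Set.Ioc (-1:ℝ) 1, K x * ((1-x)/(2+u*(1-x)))) ≤ 0 := by
    apply MeasureTheory.setIntegral_nonpos measurableSet_Ioc
    intro u hu
    have h1 : (∫ x in Set.Ioc (-1:ℝ) 1, K x * ((1-x)/(2+u*(1-x))))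
        = ∫ x in (-1:ℝ)..1, K x * ((1-x)/(2+u*(1-x))) :=
      (intervalIntegral.integral_of_le (by norm_num : (-1:ℝ) ≤ 1)).symm
    rw [h1]
    exact Rnonpos a b r hr hu.1
  exact mul_nonpos_of_nonneg_of_nonpos (by positivity) hfinal
end QAux

/-- For every `ρ > 0`, the quantity
`Q(ρ) = ∫_{-1}^1 (1-x)^a (1+x)^b log₂(1+ρ(1-x)/2) P_r^{a,b}(x) P_{r-2}^{a+1,b+1}(x) dx`
is nonpositive. -/
theorem Q_nonpos (a b r : ℕ) (hr : 2 ≤ r) :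
    ∀ ρ : ℝ, 0 < ρ →
      (∫ x in (-1 : ℝ)..1,
          (1 - x) ^ a * (1 + x) ^ b * Real.logb 2 (1 + ρ * (1 - x) / 2) *
            jacobiP a b r x * jacobiP (a + 1) (b + 1) (r - 2) x) ≤ 0 :=
  QAux.Q_nonpos' a b r hr
end

section
/- The integral ∫_{−1}^{1} (1−x)^{a+1} (1+x)^b · P_{r-1}^{a,b}(x) · P_{r-1}^{a+1,b+1}(x) dx equals 2 r (r+a) / ( (2r+a+b) · M_r^{a,b} ), where M_r^{a,b} = (r+a+b+1)! · r! / ( 2^{a+b+1} · (r+a−1)! · (r+b−1)! · (2r+a+b) ). -/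
open scoped BigOperators

section JacobiAux
open Finset Polynomial intervalIntegral


lemma alt_sum_vanish : ∀ (n : ℕ) (φ : Polynomial ℝ), φ.degree < n →
    ∑ t ∈ range (n+1), (-1:ℝ)^t * (n.choose t) * φ.eval (t:ℝ) = 0 := by
  intro n
  induction n with
  | zero =>
    intro φ h
    have h0 : φ.degree < 0 := by exact_mod_cast h
    have : φ = 0 := Polynomial.degree_eq_bot.mp (Nat.WithBot.lt_zero_iff.mp h0)
    simp [this]
  | succ n ih =>
    intro φ h
    by_cases hφ : φ = 0
    · simp [hφ]
    set ψ : Polynomial ℝ := φ - φ.comp (X + C 1) with hψ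
    have hcompne : φ.comp (X + C 1) ≠ 0 := comp_X_add_C_ne_zero_iff.mpr hφ
    have hcompdeg : (φ.comp (X + C 1)).natDegree = φ.natDegree := by
      rw [natDegree_comp, natDegree_X_add_C, mul_one]
    have hdeg : ψ.degree < φ.degree := by
      apply degree_sub_lt _ hφ
      · rw [leadingCoeff_comp (by rw [natDegree_X_add_C]; norm_num), leadingCoeff_X_add_C,
          one_pow, mul_one]
      · rw [degree_eq_natDegree hφ, degree_eq_natDegree hcompne, hcompdeg]
    have hdn : (φ.natDegree : WithBot ℕ) ≤ (n : WithBot ℕ) := by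
      have h2 : φ.natDegree < n + 1 := by
        have := h; rw [degree_eq_natDegree hφ] at this; exact_mod_cast this
      exact_mod_cast Nat.lt_succ_iff.mp h2
    have hdeg' : ψ.degree < (n : WithBot ℕ) :=
      lt_of_lt_of_le (by rwa [degree_eq_natDegree hφ] at hdeg) hdn
    have key := ih ψ hdeg'
    have hevalψ : ∀ t : ℝ, ψ.eval t = φ.eval t - φ.eval (t+1) := by
      intro t; simp [hψ, eval_comp, add_comm]
    -- reindex
    have step1 : ∑ t ∈ range (n+2), (-1:ℝ)^t * ((n+1).choose t) * φ.eval (t:ℝ)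
        = ∑ t ∈ range (n+1), (-1:ℝ)^t * (n.choose t) * (φ.eval (t:ℝ) - φ.eval ((t:ℝ)+1)) := by
      rw [Finset.sum_range_succ' (fun t => (-1:ℝ)^t * ((n+1).choose t) * φ.eval (t:ℝ)) (n+1)]
      have pascal : ∀ t : ℕ, (-1:ℝ)^(t+1) * ((n+1).choose (t+1)) * φ.eval ((t:ℝ)+1)
          = -((-1:ℝ)^t * (n.choose (t+1)) * φ.eval ((t:ℝ)+1))
            - (-1:ℝ)^t * (n.choose t) * φ.eval ((t:ℝ)+1) := by
        intro t
        have : ((n+1).choose (t+1) : ℝ) = n.choose t + n.choose (t+1) := by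
          exact_mod_cast Nat.choose_succ_succ' n t
        rw [this]; ring
      have recast : ∀ t : ℕ, ((t+1 : ℕ) : ℝ) = (t:ℝ)+1 := by intro t; push_cast; ring
      simp only [recast, pascal]
      rw [Finset.sum_sub_distrib, Finset.sum_neg_distrib]
      -- A := ∑_{t∈range(n+1)} (-1)^t C(n,t+1) φ(t+1)
      have hA : ∑ t ∈ range (n+1), (-1:ℝ)^t * (n.choose (t+1)) * φ.eval ((t:ℝ)+1)
          = -(∑ t ∈ range (n+1), (-1:ℝ)^t * (n.choose t) * φ.eval (t:ℝ))
            + φ.eval 0 := by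
        rw [Finset.sum_range_succ (fun t => (-1:ℝ)^t * (n.choose (t+1)) * φ.eval ((t:ℝ)+1)) n]
        rw [Nat.choose_succ_self]
        rw [Finset.sum_range_succ' (fun t => (-1:ℝ)^t * (n.choose t) * φ.eval (t:ℝ)) n]
        simp only [recast]
        have : ∀ t : ℕ, (-1:ℝ)^(t+1) * (n.choose (t+1)) * φ.eval ((t:ℝ)+1)
            = -((-1:ℝ)^t * (n.choose (t+1)) * φ.eval ((t:ℝ)+1)) := by intro t; ring
        simp only [this, Finset.sum_neg_distrib]
        simp
      rw [hA]
      simp only [mul_sub]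
      rw [Finset.sum_sub_distrib]
      simp
      ring
    calc ∑ t ∈ range (n+1+1), (-1:ℝ)^t * ((n+1).choose t) * φ.eval (t:ℝ)
        = ∑ t ∈ range (n+1), (-1:ℝ)^t * (n.choose t) * (φ.eval (t:ℝ) - φ.eval ((t:ℝ)+1)) := step1
      _ = ∑ t ∈ range (n+1), (-1:ℝ)^t * (n.choose t) * ψ.eval (t:ℝ) := by
          simp only [hevalψ]
      _ = 0 := key


lemma fact_pred_mul (B : ℕ) (hB : 1 ≤ B) : (B.factorial:ℝ) = B * (B-1).factorial := by
  obtain ⟨C, rfl⟩ : ∃ C, B = C + 1 := ⟨B-1, by omega⟩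
  rw [Nat.factorial_succ]
  push_cast [Nat.add_sub_cancel]
  ring

lemma inv_alt_sum : ∀ (n B : ℕ), 1 ≤ B →
    ∑ t ∈ range (n+1), (-1:ℝ)^t * (n.choose t) / ((B:ℝ) + n - t)
      = (-1:ℝ)^n * n.factorial * (B-1).factorial / (B+n).factorial := by
  intro n
  induction n with
  | zero =>
    intro B hB
    have hB0 : (B:ℝ) ≠ 0 := by positivity
    have hBf0 : ((B-1).factorial : ℝ) ≠ 0 := by positivity
    rw [show (0:ℕ)+1 = 1 from rfl, Finset.sum_range_one]
    simp only [Nat.add_zero, pow_zero, Nat.choose_self, Nat.factorial_zero, Nat.cast_zero,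
      Nat.cast_one, one_mul, add_zero, sub_zero]
    rw [fact_pred_mul B hB]
    field_simp
  | succ n ih =>
    intro B hB
    have recast : ∀ t : ℕ, ((t+1 : ℕ) : ℝ) = (t:ℝ)+1 := by intro t; push_cast; ring
    have hstep : ∑ t ∈ range (n+1+1), (-1:ℝ)^t * ((n+1).choose t) / ((B:ℝ) + ((n+1:ℕ):ℝ) - t)
        = (∑ t ∈ range (n+1), (-1:ℝ)^t * (n.choose t) / (((B+1:ℕ):ℝ) + n - t))
          - ∑ t ∈ range (n+1), (-1:ℝ)^t * (n.choose t) / ((B:ℝ) + n - t) := by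
      simp only [recast]
      rw [Finset.sum_range_succ' (fun t => (-1:ℝ)^t * ((n+1).choose t) / ((B:ℝ) + ((n:ℝ)+1) - t)) (n+1)]
      have pascal : ∀ t : ℕ, (-1:ℝ)^(t+1) * ((n+1).choose (t+1)) / ((B:ℝ) + ((n:ℝ)+1) - ((t:ℝ)+1))
          = -((-1:ℝ)^t * (n.choose (t+1)) / ((B:ℝ) + n - t))
            - (-1:ℝ)^t * (n.choose t) / ((B:ℝ) + n - t) := by
        intro t
        have hc : ((n+1).choose (t+1) : ℝ) = n.choose t + n.choose (t+1) := by
          exact_mod_cast Nat.choose_succ_succ' n t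
        have hd : (B:ℝ) + ((n:ℝ)+1) - ((t:ℝ)+1) = (B:ℝ) + n - t := by ring
        rw [hc, hd]; ring
      simp only [recast, pascal]
      have hA : ∑ t ∈ range (n+1), (-1:ℝ)^t * (n.choose (t+1)) / ((B:ℝ) + n - t)
          = -(∑ t ∈ range (n+1), (-1:ℝ)^t * (n.choose t) / (((B+1:ℕ):ℝ) + n - t))
            + 1 / ((B:ℝ) + n + 1) := by
        rw [Finset.sum_range_succ (fun t => (-1:ℝ)^t * (n.choose (t+1)) / ((B:ℝ) + n - t)) n]
        rw [Nat.choose_succ_self]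
        rw [Finset.sum_range_succ' (fun t => (-1:ℝ)^t * (n.choose t) / (((B+1:ℕ):ℝ) + n - t)) n]
        simp only [recast]
        have hterm : ∀ t : ℕ, (-1:ℝ)^(t+1) * (n.choose (t+1)) / (((B:ℝ)+1) + n - ((t:ℝ)+1))
            = -((-1:ℝ)^t * (n.choose (t+1)) / ((B:ℝ) + n - t)) := by
          intro t
          have hd : ((B:ℝ)+1) + n - ((t:ℝ)+1) = (B:ℝ) + n - t := by ring
          rw [hd]; ring
        simp only [hterm]
        rw [Finset.sum_neg_distrib]
        push_cast
        simp
        ring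
      rw [Finset.sum_sub_distrib, Finset.sum_neg_distrib, hA]
      push_cast
      simp
      ring
    rw [hstep, ih B hB, ih (B+1) (by omega)]
    have h1 : (B+1) - 1 = B := by omega
    rw [h1]
    have e1 : ((B+(n+1)).factorial:ℝ) = ((B:ℝ)+n+1) * (B+n).factorial := by
      rw [show B+(n+1) = (B+n)+1 from by omega, Nat.factorial_succ]; push_cast; ring
    have e2 := fact_pred_mul B hB
    have hX : (B+1) + n = B + n + 1 := by omega
    rw [hX]
    have e3 : ((B+n+1).factorial:ℝ) = ((B:ℝ)+n+1) * (B+n).factorial := by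
      rw [Nat.factorial_succ]; push_cast; ring
    have h2 : ((B+n).factorial:ℝ) ≠ 0 := by positivity
    have h3 : ((B:ℝ)+n+1) ≠ 0 := by positivity
    have h4 : ((B-1).factorial:ℝ) ≠ 0 := by positivity
    have h5 : ((n:ℝ)+1) ≠ 0 := by positivity
    rw [e1, e2, e3, Nat.factorial_succ]
    push_cast
    field_simp
    ring

lemma fact_prod (m : ℕ) : ∀ p : ℕ, (m.factorial : ℝ) * ∏ i ∈ range p, ((m+1+i:ℕ):ℝ) = (m+p).factorial := by
  intro p
  induction p with
  | zero => simp
  | succ p ih =>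
    rw [Finset.prod_range_succ, ← mul_assoc, ih, show m+(p+1) = (m+p)+1 from by omega,
      Nat.factorial_succ]
    push_cast
    ring

lemma W_vanish (n A B p q : ℕ) (hpq : p + q < n) :
    ∑ t ∈ range (n+1), (-1:ℝ)^t * ((n+A).choose (n-t)) * ((n+B).choose t)
      * ((A+p+t).factorial) * ((B+q+(n-t)).factorial) = 0 := by
  set φ : Polynomial ℝ := (∏ i ∈ range p, (X + C ((A+1+i:ℕ):ℝ)))
      * (∏ i ∈ range q, (X - C ((B+n+1+i:ℕ):ℝ))) with hφ
  have hdeg : φ.degree = (p + q : ℕ) := by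
    rw [hφ, degree_mul, degree_prod, degree_prod,
      Finset.sum_congr rfl (fun i _ => degree_X_add_C ((A+1+i:ℕ):ℝ)),
      Finset.sum_congr rfl (fun i _ => degree_X_sub_C ((B+n+1+i:ℕ):ℝ)),
      Finset.sum_const, Finset.sum_const, card_range, card_range]
    simp [nsmul_eq_mul]
  have hdlt : φ.degree < (n : WithBot ℕ) := by rw [hdeg]; exact_mod_cast hpq
  have hvan := alt_sum_vanish n φ hdlt
  have claim : ∀ t ∈ range (n+1),
      (n.factorial:ℝ) * ((-1:ℝ)^t * ((n+A).choose (n-t)) * ((n+B).choose t)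
        * ((A+p+t).factorial) * ((B+q+(n-t)).factorial))
      = ((n+A).factorial:ℝ) * ((n+B).factorial) * (-1)^q
        * ((-1:ℝ)^t * (n.choose t) * φ.eval (t:ℝ)) := by
    intro t ht
    have htn : t ≤ n := by simpa [Nat.lt_succ_iff] using ht
    have hc1 : (((n+A).choose (n-t)) : ℝ)
        = (n+A).factorial / ((n-t).factorial * (A+t).factorial) := by
      rw [Nat.cast_choose ℝ (show n-t ≤ n+A by omega), show (n+A)-(n-t) = A+t from by omega]
    have hc2 : (((n+B).choose t) : ℝ)
        = (n+B).factorial / (t.factorial * (B+(n-t)).factorial) := by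
      rw [Nat.cast_choose ℝ (show t ≤ n+B by omega), show (n+B)-t = B+(n-t) from by omega]
    have hcn : ((n.choose t) : ℝ) = n.factorial / (t.factorial * (n-t).factorial) := by
      rw [Nat.cast_choose ℝ htn]
    have hf4 : ((A+p+t).factorial:ℝ) = (A+t).factorial * ∏ i ∈ range p, ((A+t+1+i:ℕ):ℝ) := by
      rw [show A+p+t = A+t+p from by omega, ← fact_prod (A+t) p]
    have hf5 : ((B+q+(n-t)).factorial:ℝ)
        = (B+(n-t)).factorial * ∏ i ∈ range q, ((B+(n-t)+1+i:ℕ):ℝ) := by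
      rw [show B+q+(n-t) = B+(n-t)+q from by omega, ← fact_prod (B+(n-t)) q]
    have heval : φ.eval (t:ℝ) = (∏ i ∈ range p, ((A+t+1+i:ℕ):ℝ))
        * ((-1:ℝ)^q * ∏ i ∈ range q, ((B+(n-t)+1+i:ℕ):ℝ)) := by
      rw [hφ, eval_mul, eval_prod, eval_prod]
      congr 1
      · apply Finset.prod_congr rfl
        intro i _
        push_cast
        simp; ring
      · rw [show ((-1:ℝ)^q * ∏ i ∈ range q, ((B+(n-t)+1+i:ℕ):ℝ))
            = ∏ i ∈ range q, (-((B+(n-t)+1+i:ℕ):ℝ)) from by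
          rw [show ((-1:ℝ)^q) = ∏ _i ∈ range q, (-1:ℝ) from by
            rw [Finset.prod_const, card_range], ← Finset.prod_mul_distrib]
          exact Finset.prod_congr rfl (fun i _ => by ring)]
        apply Finset.prod_congr rfl
        intro i _
        push_cast [Nat.cast_sub htn]
        simp; ring
    rw [hc1, hc2, hcn, hf4, hf5, heval]
    have d1 : ((n-t).factorial:ℝ) ≠ 0 := by positivity
    have d2 : ((A+t).factorial:ℝ) ≠ 0 := by positivity
    have d3 : ((t).factorial:ℝ) ≠ 0 := by positivity
    have d4 : ((B+(n-t)).factorial:ℝ) ≠ 0 := by positivity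
    field_simp
    ring_nf
    rw [show ((-1:ℝ)^(q*2)) = 1 from by rw [pow_mul']; norm_num]
  have hsum : (n.factorial:ℝ) * ∑ t ∈ range (n+1), ((-1:ℝ)^t * ((n+A).choose (n-t))
      * ((n+B).choose t) * ((A+p+t).factorial) * ((B+q+(n-t)).factorial))
      = ((n+A).factorial:ℝ) * ((n+B).factorial) * (-1)^q
        * ∑ t ∈ range (n+1), ((-1:ℝ)^t * (n.choose t) * φ.eval (t:ℝ)) := by
    rw [Finset.mul_sum, Finset.mul_sum]
    exact Finset.sum_congr rfl claim
  rw [hvan, mul_zero] at hsum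
  have hn0 : (n.factorial:ℝ) ≠ 0 := by positivity
  exact (mul_eq_zero.mp hsum).resolve_left hn0

set_option maxHeartbeats 1000000 in
lemma W_top (n a b : ℕ) (hn : 1 ≤ n) :
    ∑ t ∈ range (n+1), (-1:ℝ)^t * ((n+a+1).choose (n-t)) * ((n+b+1).choose t)
        * ((a+1+n+t).factorial) * ((b+(n-t)).factorial)
      = (-1:ℝ)^n * (n+a+1).factorial * b.factorial * (2*n+a+b+2).factorial
          / (n+a+b+2).factorial := by
  set P : Polynomial ℝ := ∏ i ∈ range n, (X + C ((a+2+i:ℕ):ℝ)) with hP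
  set c : ℝ := P.eval ((b+n+1:ℕ):ℝ) with hc
  have hPdeg : P.degree = (n : WithBot ℕ) := by
    rw [hP, degree_prod, Finset.sum_congr rfl (fun i _ => degree_X_add_C ((a+2+i:ℕ):ℝ)),
      Finset.sum_const, card_range]
    simp [nsmul_eq_mul]
  have hP0 : 0 < P.degree := by
    rw [hPdeg]; exact_mod_cast (show (0:ℕ) < n from hn)
  have hsub : (P - C c).degree = (n : WithBot ℕ) := by rw [degree_sub_C hP0, hPdeg]
  obtain ⟨Q, hQ⟩ := X_sub_C_dvd_sub_C_eval (a := ((b+n+1:ℕ):ℝ)) (p := P)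
  have hQne : Q ≠ 0 := by
    intro h0; rw [h0, mul_zero] at hQ; rw [hQ] at hsub; simp at hsub
  have hdsum : (1 : WithBot ℕ) + Q.degree = (n : WithBot ℕ) := by
    rw [← degree_X_sub_C (((b+n+1:ℕ):ℝ)), ← degree_mul, ← hQ, hsub]
  have hQdeg : Q.degree < (n : WithBot ℕ) := by
    rw [degree_eq_natDegree hQne] at hdsum ⊢
    have h1 : 1 + Q.natDegree = n := by exact_mod_cast hdsum
    exact_mod_cast (show Q.natDegree < n by omega)
  have hvan := alt_sum_vanish n Q hQdeg
  have hinv := inv_alt_sum n (b+1) (by omega)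
  -- c as closed form
  have hcval : ((n+a+b+2).factorial : ℝ) * c = (2*n+a+b+2).factorial := by
    have : c = ∏ i ∈ range n, ((n+a+b+3+i:ℕ):ℝ) := by
      rw [hc, hP, eval_prod]
      apply Finset.prod_congr rfl
      intro i _
      simp only [eval_add, eval_X, eval_C]
      push_cast
      ring
    rw [this]
    have h2 := fact_prod (n+a+b+2) n
    have hpc : ∏ i ∈ range n, ((n+a+b+3+i:ℕ):ℝ) = ∏ i ∈ range n, ((n+a+b+2+1+i:ℕ):ℝ) :=
      Finset.prod_congr rfl (fun i _ => by push_cast; ring)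
    rw [hpc, h2, show n+a+b+2+n = 2*n+a+b+2 from by omega]
  -- termwise
  have claim : ∀ t ∈ range (n+1),
      (-1:ℝ)^t * ((n+a+1).choose (n-t)) * ((n+b+1).choose t)
        * ((a+1+n+t).factorial) * ((b+(n-t)).factorial)
      = ((n+a+1).factorial:ℝ) * ((n+b+1).factorial) / n.factorial
        * ( -((-1:ℝ)^t * (n.choose t) * Q.eval (t:ℝ))
            + c * ((-1:ℝ)^t * (n.choose t) / (((b+1:ℕ):ℝ) + n - t)) ) := by
    intro t ht
    have htn : t ≤ n := by simpa [Nat.lt_succ_iff] using ht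
    have hc1 : (((n+a+1).choose (n-t)) : ℝ)
        = (n+a+1).factorial / ((n-t).factorial * (a+1+t).factorial) := by
      rw [Nat.cast_choose ℝ (show n-t ≤ n+a+1 by omega),
        show (n+a+1)-(n-t) = a+1+t from by omega]
    have hc2 : (((n+b+1).choose t) : ℝ)
        = (n+b+1).factorial / (t.factorial * (b+1+(n-t)).factorial) := by
      rw [Nat.cast_choose ℝ (show t ≤ n+b+1 by omega),
        show (n+b+1)-t = b+1+(n-t) from by omega]
    have hcn : ((n.choose t) : ℝ) = n.factorial / (t.factorial * (n-t).factorial) := by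
      rw [Nat.cast_choose ℝ htn]
    have hf4 : ((a+1+n+t).factorial:ℝ)
        = (a+1+t).factorial * ∏ i ∈ range n, ((a+t+2+i:ℕ):ℝ) := by
      rw [show a+1+n+t = (a+1+t)+n from by omega, ← fact_prod (a+1+t) n]
      congr 1
      exact Finset.prod_congr rfl (fun i _ => by push_cast; ring)
    have hf5 : ((b+1+(n-t)).factorial:ℝ) = ((b+1+(n-t):ℕ):ℝ) * (b+(n-t)).factorial := by
      rw [show b+1+(n-t) = (b+(n-t))+1 from by omega, Nat.factorial_succ]
      push_cast; ring
    have hPt : P.eval (t:ℝ) = ∏ i ∈ range n, ((a+t+2+i:ℕ):ℝ) := by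
      rw [hP, eval_prod]
      apply Finset.prod_congr rfl
      intro i _
      simp only [eval_add, eval_X, eval_C]
      push_cast
      ring
    have hQt : (∏ i ∈ range n, ((a+t+2+i:ℕ):ℝ))
        = Q.eval (t:ℝ) * ((t:ℝ) - ((b+n+1:ℕ):ℝ)) + c := by
      have := congrArg (eval (t:ℝ)) hQ
      simp only [eval_sub, eval_mul, eval_X, eval_C] at this
      rw [← hPt]
      linarith [this]
    have hden : (((b+1:ℕ):ℝ) + n - t) = ((b+1+(n-t):ℕ):ℝ) := by
      push_cast [Nat.cast_sub htn]; ring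
    have hden2 : ((t:ℝ) - ((b+n+1:ℕ):ℝ)) = -(((b+1:ℕ):ℝ) + n - t) := by push_cast; ring
    have hdenne : (((b+1:ℕ):ℝ) + n - t) ≠ 0 := by
      rw [hden]; positivity
    have d1 : ((n-t).factorial:ℝ) ≠ 0 := by positivity
    have d2 : ((a+1+t).factorial:ℝ) ≠ 0 := by positivity
    have d3 : ((t).factorial:ℝ) ≠ 0 := by positivity
    have d4 : ((b+(n-t)).factorial:ℝ) ≠ 0 := by positivity
    have d5 : ((n).factorial:ℝ) ≠ 0 := by positivity
    rw [hc1, hc2, hcn, hf4, hf5, hden]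
    have h2 : (∏ i ∈ range n, ((a+t+2+i:ℕ):ℝ))
        = Q.eval (t:ℝ) * (-((b+1+(n-t):ℕ):ℝ)) + c := by
      rw [hQt, hden2, hden]
    rw [h2]
    have d6 : ((b+1+(n-t):ℕ):ℝ) ≠ 0 := by positivity
    generalize hD : ((b+1+(n-t):ℕ):ℝ) = D at d6 ⊢
    field_simp
  rw [Finset.sum_congr rfl claim, ← Finset.mul_sum, Finset.sum_add_distrib,
    Finset.sum_neg_distrib, hvan, ← Finset.mul_sum, hinv]
  have e0 : ((n+a+b+2).factorial : ℝ) ≠ 0 := by positivity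
  have e1 : ((n).factorial : ℝ) ≠ 0 := by positivity
  have e2 : ((b+1+n).factorial : ℝ) ≠ 0 := by positivity
  have e3 : ((n+b+1).factorial : ℝ) = (b+1+n).factorial := by rw [show n+b+1 = b+1+n from by omega]
  have e4 : ((b+1)-1 : ℕ) = b := by omega
  rw [e3, e4, neg_zero, zero_add]
  rw [← hcval]
  field_simp


lemma beta_int : ∀ (p q : ℕ), (∫ x in (-1:ℝ)..1, (1-x)^p * (1+x)^q)
    = 2^(p+q+1) * p.factorial * q.factorial / (p+q+1).factorial := by
  intro p
  induction p with
  | zero =>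
    intro q
    have hd : ∀ x : ℝ, HasDerivAt (fun y : ℝ => (1+y)^(q+1) / ((q:ℝ)+1)) ((1+x)^q) x := by
      intro x
      have h1 : HasDerivAt (fun y : ℝ => (1+y)) 1 x := (hasDerivAt_id x).const_add 1
      have h2 : HasDerivAt (fun y : ℝ => (1+y)^(q+1)) (((q:ℝ)+1) * (1+x)^q * 1) x := by
        simpa using (h1.fun_pow (q+1))
      have h3 := h2.div_const ((q:ℝ)+1)
      have hq : ((q:ℝ)+1) ≠ 0 := by positivity
      refine h3.congr_deriv ?_
      field_simp
    have hi : ∫ x in (-1:ℝ)..1, (1+x)^q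
        = (1+(1:ℝ))^(q+1)/((q:ℝ)+1) - (1+(-1:ℝ))^(q+1)/((q:ℝ)+1) := by
      apply integral_eq_sub_of_hasDerivAt (fun x _ => hd x)
      apply Continuous.intervalIntegrable
      continuity
    have hq : ((q:ℝ)+1) ≠ 0 := by positivity
    have hfq : ((q+1).factorial:ℝ) = ((q:ℝ)+1) * q.factorial := by
      rw [Nat.factorial_succ]; push_cast; ring
    simp only [pow_zero, one_mul] at *
    rw [hi, show (0+q+1) = q+1 from by omega, hfq]
    have hfq0 : (q.factorial:ℝ) ≠ 0 := by positivity
    norm_num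
    field_simp
  | succ p ih =>
    intro q
    have hcont : ∀ (m k : ℕ), Continuous (fun x : ℝ => (1-x)^m * (1+x)^k) := by
      intro m k; continuity
    have hG : ∀ x : ℝ, HasDerivAt (fun y : ℝ => (1-y)^(p+1) * (1+y)^(q+1))
        (-(((p:ℝ)+1) * ((1-x)^p * (1+x)^(q+1))) + ((q:ℝ)+1) * ((1-x)^(p+1) * (1+x)^q)) x := by
      intro x
      have h1 : HasDerivAt (fun y : ℝ => (1-y)) (-1) x := by
        simpa using (hasDerivAt_id x).const_sub 1
      have h2 : HasDerivAt (fun y : ℝ => (1-y)^(p+1)) (((p:ℝ)+1) * (1-x)^p * (-1)) x := by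
        simpa using (h1.fun_pow (p+1))
      have h3 : HasDerivAt (fun y : ℝ => (1+y)) 1 x := (hasDerivAt_id x).const_add 1
      have h4 : HasDerivAt (fun y : ℝ => (1+y)^(q+1)) (((q:ℝ)+1) * (1+x)^q * 1) x := by
        simpa using (h3.fun_pow (q+1))
      have := h2.fun_mul h4
      refine this.congr_deriv ?_
      ring
    have hzero : (∫ x in (-1:ℝ)..1, (-(((p:ℝ)+1) * ((1-x)^p * (1+x)^(q+1)))
        + ((q:ℝ)+1) * ((1-x)^(p+1) * (1+x)^q))) = 0 := by
      rw [integral_eq_sub_of_hasDerivAt (fun x _ => hG x)]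
      · norm_num
      · apply Continuous.intervalIntegrable
        continuity
    rw [intervalIntegral.integral_add, intervalIntegral.integral_neg,
      intervalIntegral.integral_const_mul, intervalIntegral.integral_const_mul] at hzero
    rotate_left
    · apply Continuous.intervalIntegrable
      exact (continuous_const.mul (hcont p (q+1))).neg
    · apply Continuous.intervalIntegrable
      exact continuous_const.mul (hcont (p+1) q)
    have hIH := ih (q+1)
    rw [hIH] at hzero
    have hq : ((q:ℝ)+1) ≠ 0 := by positivity
    have hp : ((p:ℝ)+1) ≠ 0 := by positivity
    have key : (∫ x in (-1:ℝ)..1, (1-x)^(p+1) * (1+x)^q)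
        = ((p:ℝ)+1) * (2^(p+(q+1)+1) * p.factorial * (q+1).factorial / (p+(q+1)+1).factorial)
          / ((q:ℝ)+1) := by
      field_simp at hzero ⊢
      linarith [hzero]
    rw [key]
    have e1 : ((q+1).factorial:ℝ) = ((q:ℝ)+1) * q.factorial := by
      rw [Nat.factorial_succ]; push_cast; ring
    have e2 : ((p+1).factorial:ℝ) = ((p:ℝ)+1) * p.factorial := by
      rw [Nat.factorial_succ]; push_cast; ring
    have e3 : (p+(q+1)+1) = (p+1+q+1) := by omega
    rw [e1, e2, e3]
    have h0 : ((p+1+q+1).factorial:ℝ) ≠ 0 := by positivity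
    rw [show p+1+q+1 = p+q+2 from by omega]
    rw [show 2^(p+q+1+1) = (2:ℝ)^(p+q+2) from by norm_num]
    field_simp

set_option maxHeartbeats 1000000 in
/-- `∫_{-1}^1 (1-x)^{a+1} (1+x)^b P_{r-1}^{a,b}(x) P_{r-1}^{a+1,b+1}(x) dx
    = 2 r (r+a) / ((2r+a+b) M_r^{a,b})`. -/
theorem integral_jacobi_product (a b r : ℕ) (hr : 2 ≤ r) :
    ∫ x in (-1 : ℝ)..1,
        (1 - x) ^ (a + 1) * (1 + x) ^ b * jacobiP a b (r - 1) x *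
          jacobiP (a + 1) (b + 1) (r - 1) x =
      2 * (r : ℝ) * ((r : ℝ) + (a : ℝ)) /
        ((2 * (r : ℝ) + (a : ℝ) + (b : ℝ)) * Mconst a b r) := by
  obtain ⟨n, rfl⟩ : ∃ n, r = n + 1 := ⟨r - 1, by omega⟩
  have hn : 1 ≤ n := by omega
  simp only [Nat.add_sub_cancel]
  set c : ℕ → ℕ → ℝ := fun s t =>
    ((n+a).choose (n-s) : ℝ) * ((n+b).choose s) * ((n+a+1).choose (n-t))
      * ((n+b+1).choose t) * (-1)^(s+t) / 2^(2*n) with hcdef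
  -- Step 1: pointwise expansion
  have step1 : ∀ x : ℝ, (1 - x) ^ (a + 1) * (1 + x) ^ b * jacobiP a b n x *
      jacobiP (a + 1) (b + 1) n x
      = ∑ s ∈ range (n+1), ∑ t ∈ range (n+1),
          c s t * ((1-x)^(a+1+s+t) * (1+x)^(b+(n-s)+(n-t))) := by
    intro x
    simp only [jacobiP, Finset.mul_sum, Finset.sum_mul]
    rw [Finset.sum_comm]
    apply Finset.sum_congr rfl
    intro s hs
    apply Finset.sum_congr rfl
    intro t ht
    have hsn : s ≤ n := by simpa [Nat.lt_succ_iff] using hs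
    have htn : t ≤ n := by simpa [Nat.lt_succ_iff] using ht
    have e1 : ∀ k : ℕ, ((x-1)/2)^k = (-1:ℝ)^k * (1-x)^k / 2^k := by
      intro k
      rw [show (x-1)/2 = ((-1)*(1-x))/2 from by ring, div_pow, mul_pow]
    have e2 : ∀ k : ℕ, ((x+1)/2)^k = (1+x)^k / 2^k := by
      intro k
      rw [show (x+1)/2 = (1+x)/2 from by ring, div_pow]
    rw [e1 s, e1 t, e2 (n-s), e2 (n-t)]
    simp only [hcdef]
    have h2 : (2:ℝ)^s * 2^(n-s) * 2^t * 2^(n-t) = 2^(2*n) := by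
      rw [← pow_add, ← pow_add, ← pow_add]
      congr 1
      omega
    have hpow1 : (1-x)^(a+1+s+t) = (1-x)^(a+1) * (1-x)^s * (1-x)^t := by
      rw [← pow_add, ← pow_add]
    have hpow2 : (1+x)^(b+(n-s)+(n-t)) = (1+x)^b * (1+x)^(n-s) * (1+x)^(n-t) := by
      rw [← pow_add, ← pow_add]
    have hpow3 : (-1:ℝ)^(s+t) = (-1)^s * (-1)^t := by rw [pow_add]
    rw [hpow1, hpow2, hpow3, ← h2]
    have n1 : (2:ℝ)^s ≠ 0 := by positivity
    have n2 : (2:ℝ)^(n-s) ≠ 0 := by positivity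
    have n3 : (2:ℝ)^t ≠ 0 := by positivity
    have n4 : (2:ℝ)^(n-t) ≠ 0 := by positivity
    field_simp
    ring
  -- Step 2: rewrite the integral
  rw [intervalIntegral.integral_congr (g := fun x => ∑ s ∈ range (n+1), ∑ t ∈ range (n+1),
      c s t * ((1-x)^(a+1+s+t) * (1+x)^(b+(n-s)+(n-t)))) (fun x _ => step1 x)]
  -- Step 3: integrate termwise
  have hcont : ∀ (s t : ℕ), Continuous (fun x : ℝ =>
      c s t * ((1-x)^(a+1+s+t) * (1+x)^(b+(n-s)+(n-t)))) := by
    intro s t; continuity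
  rw [intervalIntegral.integral_finset_sum (fun s _ => Continuous.intervalIntegrable
    (continuous_finset_sum _ (fun t _ => hcont s t)) _ _)]
  have step3 : ∀ s ∈ range (n+1),
      (∫ x in (-1:ℝ)..1, ∑ t ∈ range (n+1),
        c s t * ((1-x)^(a+1+s+t) * (1+x)^(b+(n-s)+(n-t))))
      = ∑ t ∈ range (n+1),
          c s t * (2^((a+1+s+t)+((b+(n-s)+(n-t)))+1) * (a+1+s+t).factorial
            * (b+(n-s)+(n-t)).factorial / ((a+1+s+t)+((b+(n-s)+(n-t)))+1).factorial) := by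
    intro s _
    rw [intervalIntegral.integral_finset_sum (fun t _ => (hcont s t).intervalIntegrable _ _)]
    exact Finset.sum_congr rfl (fun t _ => by
      rw [intervalIntegral.integral_const_mul, beta_int])
  rw [Finset.sum_congr rfl step3]
  -- Step 4: per-term cleanup
  set K : ℝ := 2^(a+b+2) / ((2*n+a+b+2).factorial : ℝ) with hK
  have step4 : ∀ s ∈ range (n+1), ∀ t ∈ range (n+1),
      c s t * (2^((a+1+s+t)+((b+(n-s)+(n-t)))+1) * (a+1+s+t).factorial
          * (b+(n-s)+(n-t)).factorial / ((a+1+s+t)+((b+(n-s)+(n-t)))+1).factorial)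
      = K * ((-1:ℝ)^s * ((n+a).choose (n-s)) * ((n+b).choose s))
          * ((-1:ℝ)^t * ((n+a+1).choose (n-t)) * ((n+b+1).choose t)
              * ((a+1+s+t).factorial) * ((b+(n-s)+(n-t)).factorial)) := by
    intro s hs t ht
    have hsn : s ≤ n := by simpa [Nat.lt_succ_iff] using hs
    have htn : t ≤ n := by simpa [Nat.lt_succ_iff] using ht
    have hexp : (a+1+s+t)+((b+(n-s)+(n-t)))+1 = 2*n+a+b+2 := by omega
    rw [hexp, hK]
    simp only [hcdef]
    have hsplit : (2:ℝ)^(2*n+a+b+2) = 2^(a+b+2) * 2^(2*n) := by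
      rw [← pow_add]; congr 1; omega
    rw [hsplit, pow_add]
    have n1 : (2:ℝ)^(2*n) ≠ 0 := by positivity
    have n2 : ((2*n+a+b+2).factorial : ℝ) ≠ 0 := by positivity
    field_simp
  rw [Finset.sum_congr rfl (fun s hs => Finset.sum_congr rfl (step4 s hs))]
  -- Step 5: inner sums
  have step5 : ∀ s ∈ range (n+1),
      ∑ t ∈ range (n+1), (K * ((-1:ℝ)^s * ((n+a).choose (n-s)) * ((n+b).choose s))
          * ((-1:ℝ)^t * ((n+a+1).choose (n-t)) * ((n+b+1).choose t)
              * ((a+1+s+t).factorial) * ((b+(n-s)+(n-t)).factorial)))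
      = (K * ((-1:ℝ)^s * ((n+a).choose (n-s)) * ((n+b).choose s)))
          * ∑ t ∈ range (n+1), ((-1:ℝ)^t * ((n+a+1).choose (n-t)) * ((n+b+1).choose t)
              * ((a+1+s+t).factorial) * ((b+(n-s)+(n-t)).factorial)) := by
    intro s _
    rw [← Finset.mul_sum]
  rw [Finset.sum_congr rfl step5]
  rw [Finset.sum_range_succ]
  -- vanishing part
  have hzero : ∀ s ∈ range n,
      (K * ((-1:ℝ)^s * ((n+a).choose (n-s)) * ((n+b).choose s)))
          * ∑ t ∈ range (n+1), ((-1:ℝ)^t * ((n+a+1).choose (n-t)) * ((n+b+1).choose t)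
              * ((a+1+s+t).factorial) * ((b+(n-s)+(n-t)).factorial)) = 0 := by
    intro s hs
    have hsn : s < n := by simpa using hs
    have hv := W_vanish n (a+1) (b+1) s (n-1-s) (by omega)
    rw [show n+(a+1) = n+a+1 from by omega, show n+(b+1) = n+b+1 from by omega,
      show (b+1)+(n-1-s) = b+(n-s) from by omega] at hv
    rw [hv, mul_zero]
  rw [Finset.sum_eq_zero hzero, zero_add]
  -- top term
  simp only [Nat.sub_self, Nat.choose_zero_right, Nat.cast_one, Nat.add_zero]
  rw [W_top n a b hn]
  -- final arithmetic
  have hchoose : ((n+b).choose n : ℝ) = (n+b).factorial / (n.factorial * b.factorial) := by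
    rw [Nat.cast_choose ℝ (show n ≤ n+b by omega), show (n+b)-n = b from by omega]
  rw [hchoose, hK]
  simp only [Mconst]
  rw [show (n+1)+a+b+1 = n+a+b+2 from by omega, show (n+1)+a-1 = n+a from by omega,
    show (n+1)+b-1 = n+b from by omega]
  have f1 : ((n+a+b+2).factorial : ℝ) ≠ 0 := by positivity
  have f2 : ((2*n+a+b+2).factorial : ℝ) ≠ 0 := by positivity
  have f3 : ((n+a).factorial : ℝ) ≠ 0 := by positivity
  have f4 : ((n+b).factorial : ℝ) ≠ 0 := by positivity
  have f5 : (n.factorial : ℝ) ≠ 0 := by positivity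
  have f6 : (b.factorial : ℝ) ≠ 0 := by positivity
  have f7 : ((n+1).factorial : ℝ) ≠ 0 := by positivity
  have f8 : (2 * ((n:ℝ)+1) + a + b) ≠ 0 := by positivity
  have f9 : ((n+a+1).factorial : ℝ) = ((n:ℝ)+a+1) * (n+a).factorial := by
    rw [show n+a+1 = (n+a)+1 from by omega, Nat.factorial_succ]; push_cast; ring
  have f10 : ((n+1).factorial : ℝ) = ((n:ℝ)+1) * n.factorial := by
    rw [Nat.factorial_succ]; push_cast; ring
  have hm1 : (-1:ℝ)^n * (-1)^n = 1 := by
    rw [← pow_add, show n+n = 2*n from by omega, pow_mul]; norm_num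
  push_cast
  rw [f9, f10]
  field_simp
  ring_nf
  rw [show ((-1:ℝ)^(n*2)) = 1 from by rw [pow_mul']; norm_num]
  ring

end JacobiAux
end

section
/- The linearized capacity integral evaluates exactly as (M_r^{a,b} / 2) · ∫_{−1}^{1} (1−x)^{a+1} (1+x)^b · [ P_{r-1}^{a,b}(x) · P_{r-1}^{a+1,b+1}(x) − N_r^{a,b} · P_r^{a,b}(x) · P_{r-2}^{a+1,b+1}(x) ] dx = r (r+a) / (2r+a+b) = m_r · m_t / m, where M_r^{a,b} = (r+a+b+1)! · r! / ( 2^{a+b+1} · (r+a−1)! · (r+b−1)! · (2r+a+b) ) and N_r^{a,b} = (r+a+b)/(r+a+b+1). -/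
open scoped BigOperators

section Aux

lemma jacobiP_cont (a b n : ℕ) : Continuous (jacobiP a b n) := by
  unfold jacobiP; fun_prop

lemma fact_ne (n : ℕ) : ((Nat.factorial n : ℝ)) ≠ 0 :=
  Nat.cast_ne_zero.mpr (Nat.factorial_ne_zero n)

lemma betaInt : ∀ (p q : ℕ), ∫ x in (-1:ℝ)..1, ((1-x)/2)^p * ((1+x)/2)^q
    = 2 * (Nat.factorial p) * (Nat.factorial q) / (Nat.factorial (p+q+1)) := by
  intro p
  induction p with
  | zero =>
    intro q
    have hderiv : ∀ x ∈ Set.uIcc (-1:ℝ) 1,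
        HasDerivAt (fun x : ℝ => (2/(q+1:ℝ)) * ((1+x)/2)^(q+1))
          (((1-x)/2)^0 * ((1+x)/2)^q) x := by
      intro x _
      have h1 : HasDerivAt (fun x : ℝ => (1+x)/2) (1/2) x := by
        simpa using ((hasDerivAt_id x).const_add 1).div_const 2
      have h2 := (h1.pow (q+1)).const_mul (2/(q+1:ℝ))
      refine h2.congr_deriv ?_
      have : ((q:ℝ)+1) ≠ 0 := by positivity
      simp only [Nat.add_sub_cancel]
      push_cast
      field_simp
    rw [intervalIntegral.integral_eq_sub_of_hasDerivAt hderiv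
      (by apply Continuous.intervalIntegrable; fun_prop)]
    simp [Nat.factorial_succ]
    rw [div_eq_div_iff (by positivity) (by positivity)]
    push_cast
    ring
  | succ p ih =>
    intro q
    have key : ∫ x in (-1:ℝ)..1,
        (-(((p:ℝ)+1)/2) * (((1-x)/2)^p * ((1+x)/2)^(q+1))
          + (((q:ℝ)+1)/2) * (((1-x)/2)^(p+1) * ((1+x)/2)^q)) = 0 := by
      have hderiv : ∀ x ∈ Set.uIcc (-1:ℝ) 1,
          HasDerivAt (fun x : ℝ => ((1-x)/2)^(p+1) * ((1+x)/2)^(q+1))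
            (-(((p:ℝ)+1)/2) * (((1-x)/2)^p * ((1+x)/2)^(q+1))
              + (((q:ℝ)+1)/2) * (((1-x)/2)^(p+1) * ((1+x)/2)^q)) x := by
        intro x _
        have h1 : HasDerivAt (fun x : ℝ => (1-x)/2) (-1/2) x := by
          simpa using ((hasDerivAt_id x).const_sub 1).div_const 2
        have h2 : HasDerivAt (fun x : ℝ => (1+x)/2) (1/2) x := by
          simpa using ((hasDerivAt_id x).const_add 1).div_const 2
        have := (h1.pow (p+1)).mul (h2.pow (q+1))
        refine this.congr_deriv ?_
        simp only [Pi.pow_apply]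
        push_cast
        ring
      rw [intervalIntegral.integral_eq_sub_of_hasDerivAt hderiv
        (by apply Continuous.intervalIntegrable; fun_prop)]
      norm_num
    rw [intervalIntegral.integral_add
        (by apply Continuous.intervalIntegrable; fun_prop)
        (by apply Continuous.intervalIntegrable; fun_prop),
      intervalIntegral.integral_const_mul, intervalIntegral.integral_const_mul,
      ih (q+1)] at key
    have e0 : p + (q+1) + 1 = p + q + 1 + 1 := by omega
    rw [e0] at key
    set I := ∫ x in (-1:ℝ)..1, ((1-x)/2)^(p+1) * ((1+x)/2)^q with hI
    set V : ℝ := 2 * (Nat.factorial p) * (Nat.factorial (q+1)) / (Nat.factorial (p+q+1+1)) with hV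
    have h2 : ((q:ℝ)+1)/2 ≠ 0 := by positivity
    have key' : I = (((p:ℝ)+1)/2 * V) / (((q:ℝ)+1)/2) := by
      rw [eq_div_iff h2]; linarith [key]
    rw [key', hV]
    have e1 : p + 1 + q + 1 = p + q + 1 + 1 := by omega
    rw [e1, Nat.factorial_succ (p+q+1), Nat.factorial_succ p, Nat.factorial_succ q]
    have f1 : (0:ℝ) < (Nat.factorial (p+q+1) : ℝ) := by exact_mod_cast Nat.factorial_pos _
    have f2 : (0:ℝ) < (Nat.factorial q : ℝ) := by exact_mod_cast Nat.factorial_pos _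
    have f3 : (0:ℝ) < (Nat.factorial p : ℝ) := by exact_mod_cast Nat.factorial_pos _
    push_cast
    have hq1 : ((q:ℝ)+1) ≠ 0 := by positivity
    have hd : ((p:ℝ) + ↑q + 1 + 1) ≠ 0 := by positivity
    field_simp

lemma Tsum (k : ℕ) : ∀ (n M : ℕ), n ≤ M →
    ∑ s ∈ Finset.range (n+1), (-1:ℝ)^s * (Nat.choose n s) * (Nat.choose (M-s) k)
      = if n ≤ k then ((Nat.choose (M-n) (k-n)) : ℝ) else 0 := by
  intro n
  induction n with
  | zero => intro M _; simp
  | succ n ih =>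
    intro M hM
    have hM1 : 1 ≤ M := by omega
    have step : ∑ s ∈ Finset.range (n+2), (-1:ℝ)^s * (Nat.choose (n+1) s) * (Nat.choose (M-s) k)
        = (∑ s ∈ Finset.range (n+1), (-1:ℝ)^s * (Nat.choose n s) * (Nat.choose (M-s) k))
          - (∑ s ∈ Finset.range (n+1), (-1:ℝ)^s * (Nat.choose n s) * (Nat.choose ((M-1)-s) k)) := by
      rw [Finset.sum_range_succ' (fun s => (-1:ℝ)^s * (Nat.choose (n+1) s) * (Nat.choose (M-s) k)) (n+1)]
      have hsplit : ∀ i ∈ Finset.range (n+1),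
          (-1:ℝ)^(i+1) * (Nat.choose (n+1) (i+1)) * (Nat.choose (M-(i+1)) k)
          = (-1:ℝ)^(i+1) * (Nat.choose n (i+1)) * (Nat.choose (M-(i+1)) k)
            + (-1) * ((-1:ℝ)^i * (Nat.choose n i) * (Nat.choose ((M-1)-i) k)) := by
        intro i _
        have : (M - (i+1)) = (M-1) - i := by omega
        rw [Nat.choose_succ_succ' n i, this]
        push_cast
        ring
      rw [Finset.sum_congr rfl hsplit, Finset.sum_add_distrib]
      have e1 : ∑ i ∈ Finset.range (n+1), (-1:ℝ)^(i+1) * (Nat.choose n (i+1)) * (Nat.choose (M-(i+1)) k)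
          = (∑ s ∈ Finset.range (n+2), (-1:ℝ)^s * (Nat.choose n s) * (Nat.choose (M-s) k))
            - (-1:ℝ)^0 * (Nat.choose n 0) * (Nat.choose (M-0) k) := by
        rw [Finset.sum_range_succ' (fun s => (-1:ℝ)^s * (Nat.choose n s) * (Nat.choose (M-s) k)) (n+1)]
        ring
      rw [e1, Finset.sum_range_succ (fun s => (-1:ℝ)^s * (Nat.choose n s) * (Nat.choose (M-s) k)) (n+1)]
      simp only [Nat.choose_succ_self, Nat.cast_zero, mul_zero, zero_mul, add_zero, pow_zero,
        Nat.choose_zero_right, Nat.cast_one, mul_one, one_mul, Nat.sub_zero, neg_one_mul,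
        Finset.sum_neg_distrib]
      ring
    rw [step, ih M (by omega), ih (M-1) (by omega)]
    by_cases h1 : n + 1 ≤ k
    · rw [if_pos (by omega), if_pos (by omega), if_pos h1]
      have e2 : (M-1)-n = (M-n-1) := by omega
      have e3 : M - n = (M-n-1) + 1 := by omega
      have e4 : k - n = (k-n-1) + 1 := by omega
      have e5 : M - (n+1) = M-n-1 := by omega
      have e6 : k - (n+1) = k-n-1 := by omega
      rw [e2, e3, e4, e5, e6, Nat.choose_succ_succ']
      push_cast
      ring
    · by_cases h2 : n ≤ k
      · have hk : k = n := by omega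
        rw [if_pos h2, if_pos h2, if_neg h1, hk]
        simp
      · rw [if_neg h2, if_neg h2, if_neg h1]
        simp

lemma term_id (a b n k s : ℕ) (hs : s ≤ n) :
    (Nat.choose (n+a) (n-s) : ℝ) * (Nat.choose (n+b) s : ℝ) * ((-1:ℝ)^s * 2^(a+b))
      * (2 * (Nat.factorial (a+s)) * (Nat.factorial (n+b+k-s)) / (Nat.factorial (a+b+n+k+1)))
    = (2^(a+b+1) * (Nat.factorial (n+a)) * (Nat.factorial (n+b)) * (Nat.factorial k)
        / ((Nat.factorial n) * (Nat.factorial (a+b+n+k+1))))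
      * ((-1:ℝ)^s * (Nat.choose n s) * (Nat.choose (n+b+k-s) k)) := by
  have h1 : n - s ≤ n + a := by omega
  have h2 : s ≤ n + b := by omega
  have h3 : k ≤ n + b + k - s := by omega
  rw [Nat.cast_choose ℝ h1, Nat.cast_choose ℝ h2, Nat.cast_choose ℝ hs, Nat.cast_choose ℝ h3]
  rw [show n + a - (n - s) = a + s by omega, show n + b + k - s - k = n + b - s by omega]
  have e2 : (2:ℝ)^(a+b+1) = 2 * 2^(a+b) := by rw [pow_succ]; ring
  rw [e2]
  field_simp

lemma Jmom (a b n k : ℕ) :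
    ∫ x in (-1:ℝ)..1, (1-x)^a * (1+x)^b * jacobiP a b n x * ((1+x)/2)^k
    = (2^(a+b+1) * (Nat.factorial (n+a)) * (Nat.factorial (n+b)) * (Nat.factorial k)
        / ((Nat.factorial n) * (Nat.factorial (a+b+n+k+1))))
      * (if n ≤ k then ((Nat.choose (b+k) (k-n)) : ℝ) else 0) := by
  have pointwise : ∀ x : ℝ, (1-x)^a * (1+x)^b * jacobiP a b n x * ((1+x)/2)^k
      = ∑ s ∈ Finset.range (n+1),
          ((Nat.choose (n+a) (n-s) : ℝ) * (Nat.choose (n+b) s : ℝ) * ((-1:ℝ)^s * 2^(a+b)))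
            * (((1-x)/2)^(a+s) * ((1+x)/2)^(b+(n-s)+k)) := by
    intro x
    unfold jacobiP
    rw [Finset.mul_sum, Finset.sum_mul]
    apply Finset.sum_congr rfl
    intro s _
    have hv : ((1-x):ℝ)^a = 2^a * ((1-x)/2)^a := by
      rw [← mul_pow]; norm_num [mul_div_cancel₀]
    have hu : ((1+x):ℝ)^b = 2^b * ((1+x)/2)^b := by
      rw [← mul_pow]; norm_num [mul_div_cancel₀]
    have hsp : ((x-1)/2 : ℝ)^s = (-1:ℝ)^s * ((1-x)/2)^s := by
      rw [show ((x-1)/2:ℝ) = -((1-x)/2) by ring, neg_pow]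
    have hx : ((x+1)/2 : ℝ) = ((1+x)/2) := by ring
    rw [hv, hu, hsp, hx, pow_add, pow_add, pow_add, pow_add]
    ring
  rw [intervalIntegral.integral_congr (g := fun x => ∑ s ∈ Finset.range (n+1),
        ((Nat.choose (n+a) (n-s) : ℝ) * (Nat.choose (n+b) s : ℝ) * ((-1:ℝ)^s * 2^(a+b)))
          * (((1-x)/2)^(a+s) * ((1+x)/2)^(b+(n-s)+k))) (fun x _ => pointwise x)]
  rw [intervalIntegral.integral_finset_sum (fun s _ => by
    apply Continuous.intervalIntegrable; fun_prop)]
  have term : ∀ s ∈ Finset.range (n+1),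
      (∫ x in (-1:ℝ)..1, ((Nat.choose (n+a) (n-s) : ℝ) * (Nat.choose (n+b) s : ℝ)
          * ((-1:ℝ)^s * 2^(a+b))) * (((1-x)/2)^(a+s) * ((1+x)/2)^(b+(n-s)+k)))
      = (2^(a+b+1) * (Nat.factorial (n+a)) * (Nat.factorial (n+b)) * (Nat.factorial k)
          / ((Nat.factorial n) * (Nat.factorial (a+b+n+k+1))))
        * ((-1:ℝ)^s * (Nat.choose n s) * (Nat.choose (n+b+k-s) k)) := by
    intro s hs
    rw [Finset.mem_range] at hs
    have hs' : s ≤ n := by omega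
    rw [intervalIntegral.integral_const_mul, betaInt (a+s) (b+(n-s)+k)]
    rw [show (a+s) + (b+(n-s)+k) + 1 = a+b+n+k+1 by omega,
      show b+(n-s)+k = n+b+k-s by omega]
    exact term_id a b n k s hs'
  rw [Finset.sum_congr rfl term, ← Finset.mul_sum, Tsum k n (n+b+k) (by omega),
    show n+b+k-n = b+k by omega]

lemma expand (a b m : ℕ) (x : ℝ) :
    (1-x) * jacobiP (a+1) (b+1) m x
    = ∑ t ∈ Finset.range (m+1), ∑ j ∈ Finset.range (t+2),
        (2 * (Nat.choose (m+a+1) (m-t) : ℝ) * (Nat.choose (m+b+1) t : ℝ)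
          * ((-1:ℝ)^(t+j) * (Nat.choose (t+1) j : ℝ))) * ((1+x)/2)^(m-t+j) := by
  unfold jacobiP
  rw [Finset.mul_sum]
  apply Finset.sum_congr rfl
  intro t _
  have key : ((1-x)/2 : ℝ)^(t+1)
      = ∑ j ∈ Finset.range (t+2), (-1:ℝ)^j * ((1+x)/2)^j * (Nat.choose (t+1) j : ℝ) := by
    have h := add_pow (-(((1+x)/2):ℝ)) 1 (t+1)
    rw [show (-(((1+x)/2):ℝ) + 1) = (1-x)/2 by ring] at h
    rw [h]
    apply Finset.sum_congr rfl
    intro j _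
    rw [neg_pow, one_pow, mul_one]
  have lhs_eq : (1-x) * ((Nat.choose (m+(a+1)) (m-t) : ℝ) * (Nat.choose (m+(b+1)) t : ℝ) *
        ((x - 1) / 2) ^ t * ((x + 1) / 2) ^ (m - t))
      = (2 * (Nat.choose (m+a+1) (m-t) : ℝ) * (Nat.choose (m+b+1) t : ℝ) * (-1:ℝ)^t)
          * (((1-x)/2)^(t+1) * ((1+x)/2)^(m-t)) := by
    have hsp : ((x-1)/2 : ℝ)^t = (-1:ℝ)^t * ((1-x)/2)^t := by
      rw [show ((x-1)/2:ℝ) = -((1-x)/2) by ring, neg_pow]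
    have hx : ((x+1)/2 : ℝ) = ((1+x)/2) := by ring
    rw [hsp, hx, pow_succ, show m+(a+1) = m+a+1 by omega, show m+(b+1) = m+b+1 by omega]
    ring
  rw [lhs_eq, key, Finset.sum_mul, Finset.mul_sum]
  apply Finset.sum_congr rfl
  intro j _
  rw [pow_add ((1+x)/2) (m-t) j, pow_add (-1:ℝ) t j]
  ring

lemma intProd (a b n m : ℕ) :
    (∫ x in (-1:ℝ)..1, (1-x)^(a+1)*(1+x)^b * (jacobiP a b n x * jacobiP (a+1) (b+1) m x))
    = ∑ t ∈ Finset.range (m+1), ∑ j ∈ Finset.range (t+2),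
        (2 * (Nat.choose (m+a+1) (m-t) : ℝ) * (Nat.choose (m+b+1) t : ℝ)
          * ((-1:ℝ)^(t+j) * (Nat.choose (t+1) j : ℝ)))
          * ∫ x in (-1:ℝ)..1, (1-x)^a*(1+x)^b * jacobiP a b n x * ((1+x)/2)^(m-t+j) := by
  have pointwise : ∀ x : ℝ, (1-x)^(a+1)*(1+x)^b * (jacobiP a b n x * jacobiP (a+1) (b+1) m x)
      = ∑ t ∈ Finset.range (m+1), ∑ j ∈ Finset.range (t+2),
          (2 * (Nat.choose (m+a+1) (m-t) : ℝ) * (Nat.choose (m+b+1) t : ℝ)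
            * ((-1:ℝ)^(t+j) * (Nat.choose (t+1) j : ℝ)))
            * ((1-x)^a*(1+x)^b * jacobiP a b n x * ((1+x)/2)^(m-t+j)) := by
    intro x
    have e : (1-x)^(a+1)*(1+x)^b * (jacobiP a b n x * jacobiP (a+1) (b+1) m x)
        = ((1-x)^a*(1+x)^b * jacobiP a b n x) * ((1-x) * jacobiP (a+1) (b+1) m x) := by
      rw [pow_succ]; ring
    rw [e, expand, Finset.mul_sum]
    apply Finset.sum_congr rfl
    intro t _
    rw [Finset.mul_sum]
    apply Finset.sum_congr rfl
    intro j _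
    ring
  rw [intervalIntegral.integral_congr (fun x _ => pointwise x)]
  rw [intervalIntegral.integral_finset_sum (fun t _ => by
    apply Continuous.intervalIntegrable
    apply continuous_finset_sum
    intro j _
    exact (continuous_const.mul (((((continuous_const.sub continuous_id).pow a).mul
      ((continuous_const.add continuous_id).pow b)).mul (jacobiP_cont a b n)).mul
      (((continuous_const.add continuous_id).div_const 2).pow _))))]
  apply Finset.sum_congr rfl
  intro t _
  rw [intervalIntegral.integral_finset_sum (fun j _ => by
    apply Continuous.intervalIntegrable
    exact (continuous_const.mul (((((continuous_const.sub continuous_id).pow a).mul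
      ((continuous_const.add continuous_id).pow b)).mul (jacobiP_cont a b n)).mul
      (((continuous_const.add continuous_id).div_const 2).pow _))))]
  apply Finset.sum_congr rfl
  intro j _
  rw [intervalIntegral.integral_const_mul]

lemma vand (u v k : ℕ) :
    ∑ t ∈ Finset.range (k+1), (Nat.choose v t) * (Nat.choose u (k-t)) = Nat.choose (v+u) k := by
  rw [Nat.add_choose_eq, Finset.Nat.sum_antidiagonal_eq_sum_range_succ_mk]

lemma vand2 (u v k : ℕ) :
    ∑ t ∈ Finset.range (k+2), t * (Nat.choose (v+1) t) * (Nat.choose u (k+1-t))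
      = (v+1) * Nat.choose (v+u) k := by
  rw [Finset.sum_range_succ' (fun t => t * (Nat.choose (v+1) t) * (Nat.choose u (k+1-t))) (k+1)]
  simp only [Nat.zero_eq, zero_mul, add_zero]
  have : ∀ i ∈ Finset.range (k+1),
      (i+1) * (Nat.choose (v+1) (i+1)) * (Nat.choose u (k+1-(i+1)))
      = (v+1) * ((Nat.choose v i) * (Nat.choose u (k-i))) := by
    intro i _
    have h := Nat.add_one_mul_choose_eq v i
    have e : k+1-(i+1) = k-i := by omega
    rw [e]
    calc (i+1) * (Nat.choose (v+1) (i+1)) * (Nat.choose u (k-i))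
        = ((v+1) * Nat.choose v i) * (Nat.choose u (k-i)) := by
          rw [h]; ring
      _ = (v+1) * ((Nat.choose v i) * (Nat.choose u (k-i))) := by ring
  rw [Finset.sum_congr rfl this, ← Finset.mul_sum, vand u v k]

lemma int2_zero (a b q : ℕ) :
    (∫ x in (-1:ℝ)..1, (1-x)^(a+1)*(1+x)^b *
      (jacobiP a b (q+2) x * jacobiP (a+1) (b+1) q x)) = 0 := by
  rw [intProd a b (q+2) q]
  apply Finset.sum_eq_zero
  intro t ht
  apply Finset.sum_eq_zero
  intro j hj
  rw [Finset.mem_range] at ht hj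
  rw [Jmom a b (q+2) (q-t+j), if_neg (by omega)]
  simp

lemma int1_val (a b q : ℕ) :
    (∫ x in (-1:ℝ)..1, (1-x)^(a+1)*(1+x)^b *
        (jacobiP a b (q+1) x * jacobiP (a+1) (b+1) (q+1) x))
    = 2 * (((q:ℝ)+(b:ℝ)+2) * (Nat.choose (2*q+a+b+3) q : ℝ)
          + (Nat.choose (2*q+a+b+4) (q+1) : ℝ))
        * (2^(a+b+1) * (Nat.factorial (q+a+1) : ℝ) * (Nat.factorial (q+b+1) : ℝ)
            / (Nat.factorial (2*q+a+b+3) : ℝ))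
      - 2 * (Nat.choose (2*q+a+b+4) (q+1) : ℝ)
        * (2^(a+b+1) * (Nat.factorial (q+a+1) : ℝ) * (Nat.factorial (q+b+1) : ℝ)
            * ((q:ℝ)+2) * ((b:ℝ)+(q:ℝ)+2) / (Nat.factorial (2*q+a+b+4) : ℝ)) := by
  set J1 : ℝ := 2^(a+b+1) * (Nat.factorial (q+a+1) : ℝ) * (Nat.factorial (q+b+1) : ℝ)
      / (Nat.factorial (2*q+a+b+3) : ℝ) with hJ1def
  set J2 : ℝ := 2^(a+b+1) * (Nat.factorial (q+a+1) : ℝ) * (Nat.factorial (q+b+1) : ℝ)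
      * ((q:ℝ)+2) * ((b:ℝ)+(q:ℝ)+2) / (Nat.factorial (2*q+a+b+4) : ℝ) with hJ2def
  have hJ1 : (∫ x in (-1:ℝ)..1, (1-x)^a*(1+x)^b * jacobiP a b (q+1) x * ((1+x)/2)^(q+1)) = J1 := by
    rw [Jmom a b (q+1) (q+1), if_pos (le_refl _), Nat.sub_self, Nat.choose_zero_right]
    rw [show (q+1)+a = q+a+1 by omega, show (q+1)+b = q+b+1 by omega,
      show a+b+(q+1)+(q+1)+1 = 2*q+a+b+3 by omega, hJ1def]
    rw [Nat.cast_one, mul_one]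
    field_simp [fact_ne]
  have hJ2 : (∫ x in (-1:ℝ)..1, (1-x)^a*(1+x)^b * jacobiP a b (q+1) x * ((1+x)/2)^(q+2)) = J2 := by
    rw [Jmom a b (q+1) (q+2), if_pos (by omega), show q+2-(q+1) = 1 by omega,
      Nat.choose_one_right]
    rw [show (q+1)+a = q+a+1 by omega, show (q+1)+b = q+b+1 by omega,
      show a+b+(q+1)+(q+2)+1 = 2*q+a+b+4 by omega, hJ2def]
    rw [Nat.factorial_succ (q+1), Nat.factorial_succ q]
    push_cast
    field_simp [fact_ne]
    ring
  rw [intProd a b (q+1) (q+1)]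
  have inner : ∀ t ∈ Finset.range (q+2),
      (∑ j ∈ Finset.range (t+2),
        (2 * (Nat.choose (q+1+a+1) (q+1-t) : ℝ) * (Nat.choose (q+1+b+1) t : ℝ)
          * ((-1:ℝ)^(t+j) * (Nat.choose (t+1) j : ℝ)))
          * ∫ x in (-1:ℝ)..1, (1-x)^a*(1+x)^b * jacobiP a b (q+1) x * ((1+x)/2)^(q+1-t+j))
      = (Nat.choose (q+a+2) (q+1-t) : ℝ) * (Nat.choose (q+b+2) t : ℝ)
          * (2*((t:ℝ)+1)*J1 - 2*J2) := by
    intro t ht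
    rw [Finset.mem_range] at ht
    rw [Finset.sum_range_succ, Finset.sum_range_succ]
    have hzero : ∑ j ∈ Finset.range t,
        (2 * (Nat.choose (q+1+a+1) (q+1-t) : ℝ) * (Nat.choose (q+1+b+1) t : ℝ)
          * ((-1:ℝ)^(t+j) * (Nat.choose (t+1) j : ℝ)))
          * ∫ x in (-1:ℝ)..1, (1-x)^a*(1+x)^b * jacobiP a b (q+1) x * ((1+x)/2)^(q+1-t+j)
        = 0 := by
      apply Finset.sum_eq_zero
      intro j hj
      rw [Finset.mem_range] at hj
      rw [Jmom a b (q+1) (q+1-t+j), if_neg (by omega)]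
      simp
    rw [hzero, zero_add]
    rw [show q+1-t+t = q+1 by omega, show q+1-t+(t+1) = q+2 by omega, hJ1, hJ2]
    rw [show t+(t+1) = 2*t+1 by omega, pow_succ, pow_mul]
    rw [show t+t = 2*t by omega, pow_mul]
    norm_num [Nat.choose_succ_self_right]
    rw [show q+1+a+1 = q+a+2 by omega, show q+1+b+1 = q+b+2 by omega]
    ring
  rw [Finset.sum_congr rfl inner]
  have splitter : ∀ t ∈ Finset.range (q+2),
      (Nat.choose (q+a+2) (q+1-t) : ℝ) * (Nat.choose (q+b+2) t : ℝ)
          * (2*((t:ℝ)+1)*J1 - 2*J2)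
      = 2*J1*((t:ℝ) * (Nat.choose (q+b+2) t : ℝ) * (Nat.choose (q+a+2) (q+1-t) : ℝ))
        + 2*J1*((Nat.choose (q+b+2) t : ℝ) * (Nat.choose (q+a+2) (q+1-t) : ℝ))
        - 2*J2*((Nat.choose (q+b+2) t : ℝ) * (Nat.choose (q+a+2) (q+1-t) : ℝ)) := by
    intro t _
    ring
  rw [Finset.sum_congr rfl splitter]
  rw [Finset.sum_sub_distrib, Finset.sum_add_distrib, ← Finset.mul_sum, ← Finset.mul_sum,
    ← Finset.mul_sum]
  have hA : ∑ t ∈ Finset.range (q+2),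
      (Nat.choose (q+b+2) t : ℝ) * (Nat.choose (q+a+2) (q+1-t) : ℝ)
      = (Nat.choose (2*q+a+b+4) (q+1) : ℝ) := by
    have h := vand (q+a+2) (q+b+2) (q+1)
    rw [show (q+b+2)+(q+a+2) = 2*q+a+b+4 by omega] at h
    exact_mod_cast congrArg (Nat.cast : ℕ → ℝ) h
  have hB : ∑ t ∈ Finset.range (q+2),
      (t:ℝ) * (Nat.choose (q+b+2) t : ℝ) * (Nat.choose (q+a+2) (q+1-t) : ℝ)
      = ((q:ℝ)+(b:ℝ)+2) * (Nat.choose (2*q+a+b+3) q : ℝ) := by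
    have h := vand2 (q+a+2) (q+b+1) q
    rw [show (q+b+1)+1 = q+b+2 by omega, show (q+b+1)+(q+a+2) = 2*q+a+b+3 by omega] at h
    have := congrArg (Nat.cast : ℕ → ℝ) h
    push_cast at this
    rw [this]
  rw [hA, hB]
  ring

end Aux


lemma final_alg (a b q : ℕ) :
    Mconst a b (q+2) / 2 *
      (2 * (((q:ℝ)+(b:ℝ)+2) * (Nat.choose (2*q+a+b+3) q : ℝ)
          + (Nat.choose (2*q+a+b+4) (q+1) : ℝ))
        * (2^(a+b+1) * (Nat.factorial (q+a+1) : ℝ) * (Nat.factorial (q+b+1) : ℝ)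
            / (Nat.factorial (2*q+a+b+3) : ℝ))
      - 2 * (Nat.choose (2*q+a+b+4) (q+1) : ℝ)
        * (2^(a+b+1) * (Nat.factorial (q+a+1) : ℝ) * (Nat.factorial (q+b+1) : ℝ)
            * ((q:ℝ)+2) * ((b:ℝ)+(q:ℝ)+2) / (Nat.factorial (2*q+a+b+4) : ℝ)))
    = ((q:ℝ)+2) * (((q:ℝ)+2) + (a:ℝ)) / (2 * ((q:ℝ)+2) + (a:ℝ) + (b:ℝ)) := by
  unfold Mconst
  rw [show q+2+a+b+1 = q+a+b+3 by omega, show q+2+a-1 = q+a+1 by omega,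
    show q+2+b-1 = q+b+1 by omega]
  rw [Nat.cast_choose ℝ (show q ≤ 2*q+a+b+3 by omega),
    Nat.cast_choose ℝ (show q+1 ≤ 2*q+a+b+4 by omega)]
  rw [show 2*q+a+b+3 - q = q+a+b+3 by omega, show 2*q+a+b+4-(q+1) = q+a+b+3 by omega]
  rw [show (2*q+a+b+4) = (2*q+a+b+3)+1 by omega, Nat.factorial_succ (2*q+a+b+3)]
  rw [show (q+2) = (q+1)+1 by omega, Nat.factorial_succ (q+1), Nat.factorial_succ q]
  have h2 : ((2:ℝ))^(a+b+1) ≠ 0 := by positivity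
  have hden : (2 * (((q:ℕ):ℝ)+1+1) + (a:ℝ) + (b:ℝ)) ≠ 0 := by positivity
  push_cast
  field_simp [fact_ne]
  ring

/-- The linearized capacity integral evaluates exactly:
`(M_r^{a,b}/2) ∫_{-1}^1 (1-x)^{a+1}(1+x)^b
   [P_{r-1}^{a,b} P_{r-1}^{a+1,b+1} - N_r^{a,b} P_r^{a,b} P_{r-2}^{a+1,b+1}] dx
 = r(r+a)/(2r+a+b) = m_r m_t / m`. -/
theorem linearized_capacity_integral (m mt mr a b r : ℕ)
    (hm : 0 < m) (hmt : 0 < mt) (hmr : 0 < mr) (hsum : mr + mt ≤ m)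
    (ha : (a : ℤ) = |(mr : ℤ) - (mt : ℤ)|) (hb : b = m - mr - mt)
    (hrdef : r = min mr mt) (hr2 : 2 ≤ r) :
    Mconst a b r / 2 *
        (∫ x in (-1 : ℝ)..1,
          (1 - x) ^ (a + 1) * (1 + x) ^ b *
            (jacobiP a b (r - 1) x * jacobiP (a + 1) (b + 1) (r - 1) x -
              Nconst a b r * jacobiP a b r x * jacobiP (a + 1) (b + 1) (r - 2) x)) =
      (r : ℝ) * ((r : ℝ) + (a : ℝ)) / (2 * (r : ℝ) + (a : ℝ) + (b : ℝ)) ∧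
    (r : ℝ) * ((r : ℝ) + (a : ℝ)) / (2 * (r : ℝ) + (a : ℝ) + (b : ℝ)) =
      (mr : ℝ) * (mt : ℝ) / (m : ℝ) := by
  obtain ⟨q, rfl⟩ : ∃ q, r = q + 2 := ⟨r - 2, by omega⟩
  -- arithmetic consequences of the hypotheses
  have habs : ((a:ℤ) = (mt:ℤ) - (mr:ℤ) ∧ mr ≤ mt) ∨ ((a:ℤ) = (mr:ℤ) - (mt:ℤ) ∧ mt ≤ mr) := by
    rcases le_total mr mt with h | h
    · left
      refine ⟨?_, h⟩
      rw [ha, abs_of_nonpos (by simp [sub_nonpos]; exact_mod_cast h)]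
      ring
    · right
      refine ⟨?_, h⟩
      rw [ha, abs_of_nonneg (by simp [sub_nonneg]; exact_mod_cast h)]
  have hprod : (q+2) * (q+2+a) = mr * mt := by
    rcases habs with ⟨h1, h2⟩ | ⟨h1, h2⟩
    · have emr : q+2 = mr := by omega
      have emt : q+2+a = mt := by omega
      rw [emt, emr]
    · have emt : q+2 = mt := by omega
      have emr : q+2+a = mr := by omega
      rw [emr, emt]
      exact Nat.mul_comm mt mr
  have hden : 2*(q+2)+a+b = m := by
    rcases habs with ⟨h1, h2⟩ | ⟨h1, h2⟩ <;> omega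
  have part2 : ((q+2:ℕ):ℝ) * (((q+2:ℕ):ℝ) + (a:ℝ)) / (2 * ((q+2:ℕ):ℝ) + (a:ℝ) + (b:ℝ))
      = (mr : ℝ) * (mt : ℝ) / (m : ℝ) := by
    have c1 : ((mr:ℝ) * (mt:ℝ)) = ((q+2:ℕ):ℝ) * (((q+2:ℕ):ℝ) + (a:ℝ)) := by
      exact_mod_cast congrArg (Nat.cast : ℕ → ℝ) hprod.symm
    have c2 : ((m:ℝ)) = 2 * ((q+2:ℕ):ℝ) + (a:ℝ) + (b:ℝ) := by
      exact_mod_cast congrArg (Nat.cast : ℕ → ℝ) hden.symm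
    rw [c1, c2]
  constructor
  · -- the integral evaluation
    have hsplit : (∫ x in (-1 : ℝ)..1,
          (1 - x) ^ (a + 1) * (1 + x) ^ b *
            (jacobiP a b (q+2 - 1) x * jacobiP (a + 1) (b + 1) (q+2 - 1) x -
              Nconst a b (q+2) * jacobiP a b (q+2) x * jacobiP (a + 1) (b + 1) (q+2 - 2) x))
        = (∫ x in (-1:ℝ)..1, (1-x)^(a+1)*(1+x)^b *
              (jacobiP a b (q+1) x * jacobiP (a+1) (b+1) (q+1) x))
          - Nconst a b (q+2) * (∫ x in (-1:ℝ)..1, (1-x)^(a+1)*(1+x)^b *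
              (jacobiP a b (q+2) x * jacobiP (a+1) (b+1) q x)) := by
      rw [show q+2-1 = q+1 from rfl, show q+2-2 = q from rfl]
      have pointwise : ∀ x ∈ Set.uIcc (-1:ℝ) 1,
          (1 - x) ^ (a + 1) * (1 + x) ^ b *
            (jacobiP a b (q+1) x * jacobiP (a + 1) (b + 1) (q+1) x -
              Nconst a b (q+2) * jacobiP a b (q+2) x * jacobiP (a + 1) (b + 1) q x)
          = ((1-x)^(a+1)*(1+x)^b * (jacobiP a b (q+1) x * jacobiP (a+1) (b+1) (q+1) x))
            - Nconst a b (q+2) * ((1-x)^(a+1)*(1+x)^b *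
                (jacobiP a b (q+2) x * jacobiP (a+1) (b+1) q x)) := by
        intro x _
        ring
      rw [intervalIntegral.integral_congr pointwise]
      rw [intervalIntegral.integral_sub
        (by apply Continuous.intervalIntegrable
            exact ((((continuous_const.sub continuous_id).pow (a+1)).mul
              ((continuous_const.add continuous_id).pow b)).mul
              ((jacobiP_cont a b (q+1)).mul (jacobiP_cont (a+1) (b+1) (q+1)))))
        (by apply Continuous.intervalIntegrable
            exact (continuous_const.mul ((((continuous_const.sub continuous_id).pow (a+1)).mul
              ((continuous_const.add continuous_id).pow b)).mul
              ((jacobiP_cont a b (q+2)).mul (jacobiP_cont (a+1) (b+1) q)))))]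
      rw [intervalIntegral.integral_const_mul]
    rw [hsplit, int2_zero, mul_zero, sub_zero, int1_val, final_alg]
    push_cast
    ring
  · -- the arithmetic identity
    exact part2
end

section
/- (Lemma 2, case m_r + m_t > m.) The ergodic capacity satisfies lim_{ρ → 0⁺} C(ρ)/ρ = m_r · m_t / (m · ln 2); that is, at low SNR, C(ρ) ≈ ρ m_r m_t / (m ln 2). -/
open scoped BigOperators

section JacobiAux
open Polynomial Finset intervalIntegral MeasureTheory Real Filter Topology

lemma intA (p q : ℕ) : ∫ x in (-1:ℝ)..1, (1-x)^p * (1+x)^q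
    = 2^(p+q+1) * (p.factorial * q.factorial) / (p+q+1).factorial := by
  induction p generalizing q with
  | zero =>
    simp only [pow_zero, one_mul, Nat.factorial_one, Nat.zero_add, Nat.factorial_zero, Nat.cast_one]
    have : ∫ x in (-1:ℝ)..1, (1+x)^q = ∫ x in (1 + -1 : ℝ)..(1+1:ℝ), x^q :=
      intervalIntegral.integral_comp_add_left (fun x => x^q) 1
    rw [this]
    norm_num [integral_pow]
    rw [Nat.factorial_succ]
    push_cast
    rw [pow_succ]
    field_simp
  | succ p ih =>
    have hF : ∀ x : ℝ, HasDerivAt (fun y : ℝ => (1-y)^(p+1) * (1+y)^(q+1))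
        (-((p+1:ℝ) * (1-x)^p) * (1+x)^(q+1) + (1-x)^(p+1) * ((q+1:ℝ)*(1+x)^q)) x := by
      intro x
      have h1 : HasDerivAt (fun y : ℝ => (1-y)^(p+1)) (-((p+1:ℝ) * (1-x)^p)) x := by
        have := ((hasDerivAt_id x).const_sub 1).pow (p+1)
        simpa [Pi.pow_def] using this.neg.neg
      have h2 : HasDerivAt (fun y : ℝ => (1+y)^(q+1)) ((q+1:ℝ) * (1+x)^q) x := by
        have := ((hasDerivAt_id x).const_add 1).pow (q+1)
        simpa [Pi.pow_def] using this
      simpa [Pi.mul_def] using h1.mul h2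
    have hcont : Continuous fun x : ℝ => -((p+1:ℝ) * (1-x)^p) * (1+x)^(q+1) + (1-x)^(p+1) * ((q+1:ℝ)*(1+x)^q) := by
      continuity
    have h0 : ∫ x in (-1:ℝ)..1, (-((p+1:ℝ) * (1-x)^p) * (1+x)^(q+1) + (1-x)^(p+1) * ((q+1:ℝ)*(1+x)^q))
        = 0 := by
      rw [intervalIntegral.integral_eq_sub_of_hasDerivAt (fun x _ => hF x)
        (hcont.intervalIntegrable _ _)]
      norm_num
    have hsplit : ∫ x in (-1:ℝ)..1, (-((p+1:ℝ) * (1-x)^p) * (1+x)^(q+1) + (1-x)^(p+1) * ((q+1:ℝ)*(1+x)^q))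
        = (-(p+1:ℝ)) * (∫ x in (-1:ℝ)..1, (1-x)^p * (1+x)^(q+1))
          + (q+1:ℝ) * ∫ x in (-1:ℝ)..1, (1-x)^(p+1) * (1+x)^q := by
      rw [← intervalIntegral.integral_const_mul, ← intervalIntegral.integral_const_mul,
        ← intervalIntegral.integral_add]
      · congr 1; ext x; ring
      · exact (by continuity : Continuous fun x:ℝ => (-(p+1:ℝ)) * ((1-x)^p * (1+x)^(q+1))).intervalIntegrable _ _
      · exact (by continuity : Continuous fun x:ℝ => ((q+1:ℝ)) * ((1-x)^(p+1) * (1+x)^q)).intervalIntegrable _ _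
    have hkey : (q+1:ℝ) * (∫ x in (-1:ℝ)..1, (1-x)^(p+1) * (1+x)^q)
        = (p+1:ℝ) * ∫ x in (-1:ℝ)..1, (1-x)^p * (1+x)^(q+1) := by
      have := h0; rw [hsplit] at this; linarith
    have hq1 : (q+1:ℝ) ≠ 0 := by positivity
    rw [ih (q+1)] at hkey
    have : (∫ x in (-1:ℝ)..1, (1-x)^(p+1) * (1+x)^q)
        = (p+1:ℝ) * (2^(p+(q+1)+1) * (p.factorial * (q+1).factorial) / (p+(q+1)+1).factorial) / (q+1:ℝ) := by
      field_simp at hkey ⊢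
      linarith
    rw [this]
    have e1 : p + (q+1) + 1 = p + 1 + q + 1 := by omega
    rw [e1, show p+1+q+1 = (p+q+1)+1 from by omega, Nat.factorial_succ (p+q+1),
      Nat.factorial_succ q, Nat.factorial_succ p]
    push_cast
    have h2 : ((p:ℝ)+q+1+1) ≠ 0 := by positivity
    have h3 : ((p+q+1).factorial : ℝ) ≠ 0 := Nat.cast_ne_zero.2 (Nat.factorial_ne_zero _)
    field_simp

lemma pint_parts (u v : Polynomial ℝ) :
    ∫ x in (-1:ℝ)..1, (derivative u).eval x * v.eval x
    = u.eval 1 * v.eval 1 - u.eval (-1) * v.eval (-1)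
      - ∫ x in (-1:ℝ)..1, u.eval x * (derivative v).eval x := by
  have h : ∫ x in (-1:ℝ)..1, ((derivative u).eval x * v.eval x + u.eval x * (derivative v).eval x)
      = u.eval 1 * v.eval 1 - u.eval (-1) * v.eval (-1) := by
    apply intervalIntegral.integral_eq_sub_of_hasDerivAt (f := fun x => u.eval x * v.eval x)
    · exact fun x _ => (u.hasDerivAt x).mul (v.hasDerivAt x)
    · exact ((u.derivative.continuous.mul v.continuous).add
        (u.continuous.mul v.derivative.continuous)).intervalIntegrable _ _
  rw [intervalIntegral.integral_add (f := fun x => (derivative u).eval x * v.eval x)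
    (g := fun x => u.eval x * (derivative v).eval x)
    ((u.derivative.continuous.mul v.continuous).intervalIntegrable _ _)
    ((u.continuous.mul v.derivative.continuous).intervalIntegrable _ _)] at h
  linarith

lemma pint_iterate (n : ℕ) (u v : Polynomial ℝ)
    (h1 : ∀ j < n, (derivative^[j] u).eval 1 = 0)
    (h2 : ∀ j < n, (derivative^[j] u).eval (-1) = 0) :
    ∫ x in (-1:ℝ)..1, (derivative^[n] u).eval x * v.eval x
    = (-1:ℝ)^n * ∫ x in (-1:ℝ)..1, u.eval x * (derivative^[n] v).eval x := by
  induction n generalizing v with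
  | zero => simp
  | succ n ih =>
    rw [Function.iterate_succ_apply', pint_parts (derivative^[n] u) v,
      h1 n (by omega), h2 n (by omega)]
    rw [ih (derivative v) (fun j hj => h1 j (by omega)) (fun j hj => h2 j (by omega))]
    rw [← Function.iterate_succ_apply derivative n v]
    ring

noncomputable def Jpoly (a b n : ℕ) : Polynomial ℝ :=
  Polynomial.C (((2:ℝ)^n)⁻¹) * ∑ s ∈ Finset.range (n+1),
    Polynomial.C ((((n+a).choose (n-s) * (n+b).choose s : ℕ)) : ℝ) * (X - 1)^s * (X + 1)^(n-s)

lemma jacobiP_eq (a b n : ℕ) (x : ℝ) : jacobiP a b n x = (Jpoly a b n).eval x := by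
  simp only [jacobiP, Jpoly, eval_mul, eval_C, eval_finset_sum, Finset.mul_sum]
  refine Finset.sum_congr rfl fun s hs => ?_
  simp only [Finset.mem_range] at hs
  simp only [eval_mul, eval_pow, eval_sub, eval_add, eval_X, eval_one, eval_C]
  rw [div_pow, div_pow]
  push_cast
  have h2n : ((2:ℝ)^n) = ((2:ℝ)^s * 2^(n-s)) := by rw [← pow_add]; congr 1; omega
  rw [h2n]
  have h1 : ((2:ℝ)^s) ≠ 0 := by positivity
  have h2 : ((2:ℝ)^(n-s)) ≠ 0 := by positivity
  field_simp
  try ring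

lemma iter_deriv_one_sub_pow (m : ℕ) : ∀ k, derivative^[k] ((1 - X : Polynomial ℝ)^m)
    = Polynomial.C ((-1:ℝ)^k * m.descFactorial k) * (1 - X)^(m-k)
  | 0 => by simp
  | (k+1) => by
    rw [Function.iterate_succ_apply', iter_deriv_one_sub_pow m k, derivative_mul, derivative_C,
      derivative_pow]
    simp only [derivative_sub, derivative_one, derivative_X, zero_sub, zero_mul, zero_add]
    rw [show m - (k+1) = (m-k) - 1 from by omega, Nat.descFactorial_succ]
    push_cast
    simp only [C_mul, C_neg, C_pow, C_1, map_natCast]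
    ring

lemma iter_deriv_one_add_pow (m : ℕ) : ∀ k, derivative^[k] ((1 + X : Polynomial ℝ)^m)
    = Polynomial.C ((m.descFactorial k : ℝ)) * (1 + X)^(m-k)
  | 0 => by simp
  | (k+1) => by
    rw [Function.iterate_succ_apply', iter_deriv_one_add_pow m k, derivative_mul, derivative_C,
      derivative_pow]
    simp only [derivative_add, derivative_one, derivative_X, zero_add, zero_mul]
    rw [show m - (k+1) = (m-k) - 1 from by omega, Nat.descFactorial_succ]
    push_cast
    simp only [C_mul, C_neg, C_pow, C_1, map_natCast]
    ring

lemma rodrigues (a b n : ℕ) :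
    (1 - X)^a * (1 + X)^b * Jpoly a b n
    = Polynomial.C ((-1:ℝ)^n / (2^n * n.factorial)) *
        derivative^[n] ((1 - X : Polynomial ℝ)^(n+a) * (1 + X)^(n+b)) := by
  have L : (1 - X)^a * (1 + X)^b * Jpoly a b n
      = ∑ s ∈ Finset.range (n+1),
          Polynomial.C (((2:ℝ)^n)⁻¹ * ((((n+a).choose (n-s) * (n+b).choose s : ℕ)) : ℝ) * (-1)^s)
            * ((1-X)^(a+s) * (1+X)^(b+(n-s))) := by
    rw [Jpoly, Finset.mul_sum, Finset.mul_sum]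
    refine Finset.sum_congr rfl fun s hs => ?_
    have hx : (X - 1 : Polynomial ℝ)^s = Polynomial.C ((-1:ℝ)^s) * (1 - X)^s := by
      rw [show (X - 1 : Polynomial ℝ) = (Polynomial.C (-1:ℝ)) * (1 - X) from by
        simp only [map_neg, C_1]; ring, mul_pow, ← C_pow]
    rw [hx]
    simp only [C_mul, C_pow, C_neg, C_1, pow_add]
    ring
  have R : Polynomial.C ((-1:ℝ)^n / (2^n * n.factorial)) *
        derivative^[n] ((1 - X : Polynomial ℝ)^(n+a) * (1 + X)^(n+b))
      = ∑ s ∈ Finset.range (n+1),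
          Polynomial.C ((-1:ℝ)^n / (2^n * n.factorial) * (n.choose s : ℝ)
              * ((-1:ℝ)^(n-s) * ((n+a).descFactorial (n-s) : ℝ)) * (((n+b).descFactorial s : ℝ)))
            * ((1-X)^(a+s) * (1+X)^(b+(n-s))) := by
    rw [Polynomial.iterate_derivative_mul, Finset.mul_sum]
    refine Finset.sum_congr rfl fun s hs => ?_
    simp only [Finset.mem_range] at hs
    rw [iter_deriv_one_sub_pow, iter_deriv_one_add_pow,
      show n + a - (n - s) = a + s from by omega, show n + b - s = b + (n-s) from by omega,
      nsmul_eq_mul]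
    rw [show ((n.choose s : ℕ) : ℝ[X]) = Polynomial.C ((n.choose s : ℕ) : ℝ) from by
      simp [Polynomial.C_eq_natCast]]
    simp only [C_mul, C_pow, C_neg, C_1]
    ring
  rw [L, R]
  refine Finset.sum_congr rfl fun s hs => ?_
  simp only [Finset.mem_range] at hs
  have hs' : s ≤ n := by omega
  congr 1
  congr 1
  rw [Nat.descFactorial_eq_factorial_mul_choose, Nat.descFactorial_eq_factorial_mul_choose]
  have hsign : ((-1:ℝ))^n = (-1)^(n-s) * (-1)^s := by rw [← pow_add]; congr 1; omega
  have hfac : (n.factorial : ℝ) = (n.choose s) * s.factorial * (n-s).factorial := by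
    exact_mod_cast (Nat.choose_mul_factorial_mul_factorial hs').symm
  have h1 : ((2:ℝ)^n) ≠ 0 := by positivity
  have h2 : ((n.choose s : ℕ):ℝ) ≠ 0 := Nat.cast_ne_zero.2 (Nat.choose_pos hs').ne'
  have h3 : (s.factorial : ℝ) ≠ 0 := Nat.cast_ne_zero.2 s.factorial_ne_zero
  have h4 : ((n-s).factorial : ℝ) ≠ 0 := Nat.cast_ne_zero.2 (n-s).factorial_ne_zero
  have h5 : ((-1:ℝ))^(n-s) * (-1)^(n-s) = 1 := by
    rw [← pow_add]
    exact Even.neg_one_pow ⟨n-s, rfl⟩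
  rw [hsign, hfac]
  push_cast
  field_simp
  linear_combination (-((((n+a).choose (n-s)) : ℝ) * (((n+b).choose s) : ℝ))) * h5

lemma exists_factor (a b n : ℕ) : ∀ j, j ≤ n → ∃ u : Polynomial ℝ,
    derivative^[j] ((1-X)^(n+a)*(1+X)^(n+b)) = (1-X)^(n-j) * (1+X)^(n-j) * u := by
  intro j
  induction j with
  | zero =>
    intro _
    exact ⟨(1-X)^a * (1+X)^b, by rw [Function.iterate_zero_apply, Nat.sub_zero, pow_add, pow_add]; ring⟩
  | succ j ih =>
    intro hj
    obtain ⟨u, hu⟩ := ih (by omega)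
    set k := n - (j+1) with hk
    have hnj : n - j = k + 1 := by omega
    refine ⟨Polynomial.C ((k:ℝ)+1) * ((1 - X) - (1 + X)) * u + (1-X)*(1+X)*(derivative u), ?_⟩
    rw [Function.iterate_succ_apply', hu, hnj]
    simp only [derivative_mul, derivative_pow, derivative_sub, derivative_add, derivative_one,
      derivative_X, zero_sub, zero_add, Nat.add_sub_cancel]
    push_cast
    ring

lemma eval_W (a b n : ℕ) (x : ℝ) :
    (((1-X:Polynomial ℝ)^(n+a)*(1+X)^(n+b))).eval x = (1-x)^(n+a)*(1+x)^(n+b) := by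
  simp [eval_mul, eval_pow]


lemma key (a b n : ℕ) (q : Polynomial ℝ) :
    ∫ x in (-1:ℝ)..1, (1-x)^a * (1+x)^b * ((Jpoly a b n).eval x * q.eval x)
    = 1 / (2^n * n.factorial) *
        ∫ x in (-1:ℝ)..1, (1-x)^(n+a) * (1+x)^(n+b) * (derivative^[n] q).eval x := by
  set W : Polynomial ℝ := (1-X)^(n+a)*(1+X)^(n+b) with hW
  have hvan1 : ∀ j < n, (derivative^[j] W).eval 1 = 0 := by
    intro j hj
    obtain ⟨u, hu⟩ := exists_factor a b n j (le_of_lt hj)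
    rw [hW, hu]
    simp only [eval_mul, eval_pow, eval_sub, eval_one, eval_X, sub_self]
    rw [zero_pow (by omega : n - j ≠ 0)]
    ring
  have hvan2 : ∀ j < n, (derivative^[j] W).eval (-1) = 0 := by
    intro j hj
    obtain ⟨u, hu⟩ := exists_factor a b n j (le_of_lt hj)
    rw [hW, hu]
    simp only [eval_mul, eval_pow, eval_add, eval_one, eval_X]
    rw [show (1 + (-1) : ℝ) = 0 from by ring, zero_pow (by omega : n - j ≠ 0)]
    ring
  have hint : ∀ x:ℝ, (1-x)^a * (1+x)^b * ((Jpoly a b n).eval x * q.eval x)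
      = ((-1:ℝ)^n / (2^n * n.factorial)) * ((derivative^[n] W).eval x * q.eval x) := by
    intro x
    have h := congrArg (Polynomial.eval x) (rodrigues a b n)
    simp only [eval_mul, eval_pow, eval_sub, eval_add, eval_one, eval_X, eval_C] at h
    rw [← mul_assoc, h]
    ring
  rw [intervalIntegral.integral_congr (fun x _ => hint x),
    intervalIntegral.integral_const_mul, pint_iterate n W q hvan1 hvan2,
    intervalIntegral.integral_congr (g := fun x => (1-x)^(n+a) * (1+x)^(n+b) * (derivative^[n] q).eval x)
      (fun x _ => by rw [hW, eval_W])]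
  rw [← mul_assoc]
  congr 1
  rw [div_mul_eq_mul_div, ← pow_add]
  rw [Even.neg_one_pow ⟨n, rfl⟩]

lemma iterate_deriv_of_deg (n : ℕ) (q : Polynomial ℝ) (h : q.natDegree ≤ n+1) :
    derivative^[n] q = Polynomial.C ((n.factorial : ℝ) * q.coeff n)
      + Polynomial.C (((n+1).factorial : ℝ) * q.coeff (n+1)) * Polynomial.X := by
  have hdeg : (derivative^[n] q).natDegree ≤ 1 :=
    (Polynomial.natDegree_iterate_derivative q n).trans (by omega)
  have heq := Polynomial.eq_X_add_C_of_natDegree_le_one hdeg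
  have hc0 : (derivative^[n] q).coeff 0 = (n.factorial : ℝ) * q.coeff n := by
    rw [Polynomial.coeff_iterate_derivative, Nat.zero_add, Nat.descFactorial_self, nsmul_eq_mul]
  have hc1 : (derivative^[n] q).coeff 1 = ((n+1).factorial : ℝ) * q.coeff (n+1) := by
    rw [Polynomial.coeff_iterate_derivative, nsmul_eq_mul]
    have hd : (n+1).descFactorial n = (n+1).factorial := by
      have h1 := Nat.descFactorial_succ (n+1) n
      rw [show n+1-n = 1 from by omega, one_mul] at h1
      rw [← h1, Nat.descFactorial_self]
    rw [show 1+n = n+1 from by omega, hd]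
  rw [heq, hc0, hc1]
  ring


lemma intB (p q : ℕ) : ∫ x in (-1:ℝ)..1, ((1-x)^p * (1+x)^q) * x
    = ((2:ℝ)^(p+q+2) * (p.factorial * q.factorial) / (p+q+2).factorial) * (((q:ℝ) - p)/2) := by
  have hptw : ∀ x : ℝ, ((1-x)^p * (1+x)^q) * x
      = ((1-x)^p * (1+x)^(q+1))/2 - ((1-x)^(p+1) * (1+x)^q)/2 := by
    intro x
    rw [pow_succ, pow_succ]
    ring
  rw [intervalIntegral.integral_congr (fun x _ => hptw x), intervalIntegral.integral_sub
    (((by continuity : Continuous fun x:ℝ => ((1-x)^p * (1+x)^(q+1))/2)).intervalIntegrable _ _)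
    (((by continuity : Continuous fun x:ℝ => ((1-x)^(p+1) * (1+x)^q)/2)).intervalIntegrable _ _),
    intervalIntegral.integral_div, intervalIntegral.integral_div, intA, intA]
  rw [show p+(q+1)+1 = p+q+2 from by omega, show p+1+q+1 = p+q+2 from by omega,
    Nat.factorial_succ q, Nat.factorial_succ p]
  have h1 : (((p+q+2).factorial : ℝ)) ≠ 0 := Nat.cast_ne_zero.2 (Nat.factorial_ne_zero _)
  push_cast
  field_simp
  ring

lemma S0 (a b n : ℕ) : ∑ s ∈ Finset.range (n+1), (n+a).choose (n-s) * (n+b).choose s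
    = (2*n+a+b).choose n := by
  rw [show 2*n+a+b = (n+a)+(n+b) from by omega, Nat.add_choose_eq,
    Finset.Nat.sum_antidiagonal_eq_sum_range_succ (f := fun i j => (n+a).choose i * (n+b).choose j),
    ← Finset.sum_range_reflect]
  refine Finset.sum_congr rfl fun s hs => ?_
  simp only [Finset.mem_range] at hs
  rw [show n + 1 - 1 - s = n - s from by omega, show n - (n - s) = s from by omega]

lemma S1 (a b k : ℕ) : ∑ s ∈ Finset.range (k+2), (k+1+a).choose (k+1-s) * ((k+1+b).choose s * s)
    = (k+1+b) * (2*k+a+b+1).choose k := by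
  rw [Finset.sum_range_succ']
  simp only [Nat.mul_zero, Nat.add_zero, mul_zero, add_zero]
  have h1 : ∀ t, (k+1+b).choose (t+1) * (t+1) = (k+1+b) * (k+b).choose t := by
    intro t
    have h := Nat.add_one_mul_choose_eq (k+b) t
    rw [show k+1+b = k+b+1 from by omega, ← h]
  have h2 : ∀ t, (k+1+a).choose (k+1-(t+1)) * ((k+1+b).choose (t+1) * (t+1))
      = (k+1+b) * ((k+(a+1)).choose (k-t) * (k+b).choose t) := by
    intro t
    rw [h1, show k+1-(t+1) = k-t from by omega, show k+1+a = k+(a+1) from by omega]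
    ring
  calc ∑ t ∈ Finset.range (k+1), (k+1+a).choose (k+1-(t+1)) * ((k+1+b).choose (t+1) * (t+1))
      = ∑ t ∈ Finset.range (k+1), (k+1+b) * ((k+(a+1)).choose (k-t) * (k+b).choose t) :=
        Finset.sum_congr rfl fun t _ => h2 t
    _ = (k+1+b) * ∑ t ∈ Finset.range (k+1), (k+(a+1)).choose (k-t) * (k+b).choose t := by
        rw [Finset.mul_sum]
    _ = (k+1+b) * (2*k+a+b+1).choose k := by
        rw [S0 (a+1) b k, show 2*k+(a+1)+b = 2*k+a+b+1 from by omega]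

lemma term_monic (n s : ℕ) (hs : s ≤ n) :
    (((X:Polynomial ℝ) - 1)^s * (X+1)^(n-s)).Monic := by
  have m1 : ((X:Polynomial ℝ) - 1).Monic := by simpa using monic_X_sub_C (1:ℝ)
  have m2 : ((X:Polynomial ℝ) + 1).Monic := by simpa using monic_X_add_C (1:ℝ)
  exact (m1.pow s).mul (m2.pow (n-s))

lemma term_natDegree (n s : ℕ) (hs : s ≤ n) :
    (((X:Polynomial ℝ) - 1)^s * (X+1)^(n-s)).natDegree = n := by
  have m1 : ((X:Polynomial ℝ) - 1).Monic := by simpa using monic_X_sub_C (1:ℝ)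
  have m2 : ((X:Polynomial ℝ) + 1).Monic := by simpa using monic_X_add_C (1:ℝ)
  rw [(m1.pow s).natDegree_mul (m2.pow (n-s)), natDegree_pow, natDegree_pow]
  have d1 : ((X:Polynomial ℝ) - 1).natDegree = 1 := by simpa using natDegree_X_sub_C (1:ℝ)
  have d2 : ((X:Polynomial ℝ) + 1).natDegree = 1 := by
    simpa using natDegree_X_add_C (1:ℝ)
  rw [d1, d2]; omega

lemma Jpoly_natDegree_le (a b n : ℕ) : (Jpoly a b n).natDegree ≤ n := by
  refine (natDegree_C_mul_le _ _).trans ?_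
  refine Polynomial.natDegree_sum_le_of_forall_le _ _ fun s hs => ?_
  simp only [Finset.mem_range] at hs
  rw [mul_assoc]
  refine (natDegree_C_mul_le _ _).trans ?_
  exact le_of_eq (term_natDegree n s (by omega))

lemma Jcoeff_top (a b n : ℕ) :
    (Jpoly a b n).coeff n = ((2:ℝ)^n)⁻¹ * ((2*n+a+b).choose n : ℝ) := by
  rw [Jpoly, coeff_C_mul, finset_sum_coeff]
  congr 1
  rw [← S0 a b n]
  push_cast
  refine Finset.sum_congr rfl fun s hs => ?_
  simp only [Finset.mem_range] at hs
  rw [mul_assoc, coeff_C_mul]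
  have := (term_monic n s (by omega)).coeff_natDegree
  rw [term_natDegree n s (by omega)] at this
  rw [this, mul_one]

lemma Jcoeff_next (a b k : ℕ) :
    (Jpoly a b (k+1)).coeff k = ((2:ℝ)^(k+1))⁻¹ * (((a:ℝ) - b) * ((2*k+a+b+1).choose k : ℝ)) := by
  rw [Jpoly, coeff_C_mul, finset_sum_coeff]
  congr 1
  have hterm : ∀ s, s ≤ k+1 → (Polynomial.C ((((k+1+a).choose (k+1-s) * (k+1+b).choose s : ℕ)) : ℝ)
        * (X - 1)^s * (X + 1)^(k+1-s)).coeff k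
      = (((k+1+a).choose (k+1-s) * (k+1+b).choose s : ℕ) : ℝ) * (((k+1:ℝ)) - 2*s) := by
    intro s hs
    rw [mul_assoc, coeff_C_mul]
    congr 1
    have hm := term_monic (k+1) s hs
    have hd := term_natDegree (k+1) s hs
    have : (((X:Polynomial ℝ) - 1)^s * (X+1)^(k+1-s)).coeff k
        = (((X:Polynomial ℝ) - 1)^s * (X+1)^(k+1-s)).nextCoeff := by
      rw [nextCoeff_of_natDegree_pos (by rw [hd]; omega), hd]
      norm_num
    rw [this]
    have m1 : ((X:Polynomial ℝ) - 1).Monic := by simpa using monic_X_sub_C (1:ℝ)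
    have m2 : ((X:Polynomial ℝ) + 1).Monic := by simpa using monic_X_add_C (1:ℝ)
    rw [Monic.nextCoeff_mul (m1.pow s) (m2.pow (k+1-s)), Monic.nextCoeff_pow m1,
      Monic.nextCoeff_pow m2]
    have n1 : ((X:Polynomial ℝ) - 1).nextCoeff = -1 := by simpa using nextCoeff_X_sub_C (1:ℝ)
    have n2 : ((X:Polynomial ℝ) + 1).nextCoeff = 1 := by simpa using nextCoeff_X_add_C (1:ℝ)
    rw [n1, n2, nsmul_eq_mul, nsmul_eq_mul, mul_one]
    push_cast [show ((k+1-s:ℕ):ℝ) = (k+1:ℝ) - s from by push_cast [Nat.cast_sub hs]; ring]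
    ring
  calc ∑ s ∈ Finset.range (k+2), (Polynomial.C ((((k+1+a).choose (k+1-s) * (k+1+b).choose s : ℕ)) : ℝ)
        * (X - 1)^s * (X + 1)^(k+1-s)).coeff k
      = ∑ s ∈ Finset.range (k+2), (((k+1+a).choose (k+1-s) * (k+1+b).choose s : ℕ) : ℝ) * (((k+1:ℝ)) - 2*s) := by
        refine Finset.sum_congr rfl fun s hs => ?_
        simp only [Finset.mem_range] at hs
        exact hterm s (by omega)
    _ = (k+1:ℝ) * (∑ s ∈ Finset.range (k+2), (((k+1+a).choose (k+1-s) * (k+1+b).choose s : ℕ) : ℝ))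
        - 2 * ∑ s ∈ Finset.range (k+2), (((k+1+a).choose (k+1-s) * ((k+1+b).choose s * s) : ℕ) : ℝ) := by
        rw [Finset.mul_sum, Finset.mul_sum, ← Finset.sum_sub_distrib]
        refine Finset.sum_congr rfl fun s hs => ?_
        push_cast
        ring
    _ = ((a:ℝ) - b) * ((2*k+a+b+1).choose k : ℝ) := by
        rw [← Nat.cast_sum, ← Nat.cast_sum, S1 a b k]
        have hS0 : ∑ s ∈ Finset.range (k+2), (k+1+a).choose (k+1-s) * (k+1+b).choose s
            = (2*(k+1)+a+b).choose (k+1) := S0 a b (k+1)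
        rw [hS0]
        have hsucc : (2*k+a+b+2) * (2*k+a+b+1).choose k = (2*(k+1)+a+b).choose (k+1) * (k+1) := by
          have h := Nat.add_one_mul_choose_eq (2*k+a+b+1) k
          rw [show 2*(k+1)+a+b = 2*k+a+b+1+1 from by omega]
          rw [show 2*k+a+b+2 = 2*k+a+b+1+1 from by omega]
          exact h
        have : ((2*(k+1)+a+b).choose (k+1) : ℝ) * (k+1)
            = (2*k+a+b+2 : ℝ) * ((2*k+a+b+1).choose k : ℝ) := by
          exact_mod_cast congrArg (Nat.cast (R := ℝ)) hsucc.symm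
        push_cast at this ⊢
        nlinarith [this]

noncomputable def eJ (a b : ℕ) : ℕ → ℝ
  | 0 => 2*((a:ℝ)+1)/((a:ℝ)+b+2)
  | (k+1) => 1 - ((b:ℝ)^2 - (a:ℝ)^2)/((2*((k:ℝ)+1)+a+b)*(2*((k:ℝ)+1)+a+b+2))


lemma Jpoly_zero (a b : ℕ) : Jpoly a b 0 = 1 := by
  simp [Jpoly]

lemma int_linear (P Q : ℕ) (c0 c1 : ℝ) :
    ∫ x in (-1:ℝ)..1, (1-x)^P * (1+x)^Q * (c0 + c1 * x)
    = c0 * (2^(P+Q+1) * (P.factorial * Q.factorial) / (P+Q+1).factorial)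
      + c1 * (((2:ℝ)^(P+Q+2) * (P.factorial * Q.factorial) / (P+Q+2).factorial) * (((Q:ℝ) - P)/2)) := by
  have hptw : ∀ x : ℝ, (1-x)^P * (1+x)^Q * (c0 + c1 * x)
      = c0 * ((1-x)^P * (1+x)^Q) + c1 * (((1-x)^P * (1+x)^Q) * x) := by intro x; ring
  rw [intervalIntegral.integral_congr (fun x _ => hptw x), intervalIntegral.integral_add
    ((by continuity : Continuous fun x:ℝ => c0 * ((1-x)^P * (1+x)^Q)).intervalIntegrable _ _)
    ((by continuity : Continuous fun x:ℝ => c1 * (((1-x)^P * (1+x)^Q) * x)).intervalIntegrable _ _),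
    intervalIntegral.integral_const_mul, intervalIntegral.integral_const_mul, intA, intB]


lemma hch1 (a b k : ℕ) : ((2*(k+1)+a+b).choose (k+1) : ℝ)
    = ((2*k+a+b+2).factorial : ℝ)/((((k+1).factorial : ℕ):ℝ) * (((k+1+a+b).factorial : ℕ):ℝ)) := by
  rw [eq_div_iff (by positivity), ← mul_assoc]
  have h := Nat.choose_mul_factorial_mul_factorial (show k+1 ≤ 2*(k+1)+a+b from by omega)
  rw [show 2*(k+1)+a+b-(k+1) = k+1+a+b from by omega] at h
  rw [show (2*k+a+b+2 : ℕ) = 2*(k+1)+a+b from by omega]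
  exact_mod_cast congrArg (Nat.cast (R := ℝ)) h

lemma hch2 (a b k : ℕ) : ((2*k+a+b+1).choose k : ℝ)
    = ((2*k+a+b+1).factorial : ℝ)/(((k.factorial : ℕ):ℝ) * (((k+1+a+b).factorial : ℕ):ℝ)) := by
  rw [eq_div_iff (by positivity), ← mul_assoc]
  have h := Nat.choose_mul_factorial_mul_factorial (show k ≤ 2*k+a+b+1 from by omega)
  rw [show 2*k+a+b+1-k = k+1+a+b from by omega] at h
  exact_mod_cast congrArg (Nat.cast (R := ℝ)) h

lemma I1_eq (a b n : ℕ) :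
    ∫ x in (-1:ℝ)..1, (1-x)^a * (1+x)^b * ((Jpoly a b n).eval x * ((1-X) * Jpoly a b n).eval x)
    = eJ a b n * jacobiNormSq a b n := by
  match n with
  | 0 =>
    rw [Jpoly_zero]
    have hptw : ∀ x : ℝ, (1-x)^a * (1+x)^b * ((1:Polynomial ℝ).eval x * (((1:Polynomial ℝ)-X) * 1).eval x)
        = (1-x)^(a+1) * (1+x)^b := by
      intro x
      simp only [eval_mul, eval_sub, eval_one, eval_X, one_mul, mul_one, pow_succ]
      ring
    rw [intervalIntegral.integral_congr (fun x _ => hptw x), intA]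
    rw [show a+1+b+1 = (a+b+1)+1 from by omega, Nat.factorial_succ (a+b+1),
      Nat.factorial_succ (a+b), Nat.factorial_succ a]
    simp only [eJ, jacobiNormSq, Nat.factorial_zero, Nat.zero_add, Nat.add_zero, Nat.cast_one,
      Nat.cast_mul, Nat.cast_add, Nat.cast_ofNat, mul_one]
    have h1 : ((a:ℝ)+b+1) ≠ 0 := by positivity
    have h2 : ((a:ℝ)+b+2) ≠ 0 := by positivity
    have h3 : (((a+b).factorial : ℕ):ℝ) ≠ 0 := Nat.cast_ne_zero.2 (Nat.factorial_ne_zero _)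
    have h4 : (2*(0:ℝ)+a+b+1) ≠ 0 := by positivity
    push_cast
    field_simp
    ring
  | (k+1) =>
    have hq : ((1-X) * Jpoly a b (k+1)).natDegree ≤ (k+1)+1 := by
      refine (natDegree_mul_le).trans ?_
      have h1 : (1 - X : Polynomial ℝ).natDegree ≤ 1 := by
        rw [show (1 - X : Polynomial ℝ) = -(X - Polynomial.C 1) from by simp]
        rw [natDegree_neg, natDegree_X_sub_C]
      have := Jpoly_natDegree_le a b (k+1)
      omega
    have hc1 : ((1-X) * Jpoly a b (k+1)).coeff ((k+1)+1)
        = -(((2:ℝ)^(k+1))⁻¹ * ((2*(k+1)+a+b).choose (k+1) : ℝ)) := by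
      rw [sub_mul, one_mul, coeff_sub, coeff_X_mul, Jcoeff_top,
        Polynomial.coeff_eq_zero_of_natDegree_lt (lt_of_le_of_lt (Jpoly_natDegree_le a b (k+1))
          (by omega : k+1 < (k+1)+1))]
      ring
    have hc0 : ((1-X) * Jpoly a b (k+1)).coeff (k+1) = ((2:ℝ)^(k+1))⁻¹ * ((2*(k+1)+a+b).choose (k+1) : ℝ)
        - ((2:ℝ)^(k+1))⁻¹ * (((a:ℝ) - b) * ((2*k+a+b+1).choose k : ℝ)) := by
      rw [sub_mul, one_mul, coeff_sub, coeff_X_mul, Jcoeff_top, Jcoeff_next]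
    rw [key a b (k+1) _, iterate_deriv_of_deg (k+1) _ hq, hc0, hc1]
    rw [intervalIntegral.integral_congr (g := fun x => (1-x)^((k+1)+a) * (1+x)^((k+1)+b) *
        ((((k+1).factorial : ℝ) * (((2:ℝ)^(k+1))⁻¹ * ((2*(k+1)+a+b).choose (k+1) : ℝ)
          - ((2:ℝ)^(k+1))⁻¹ * (((a:ℝ) - b) * ((2*k+a+b+1).choose k : ℝ))))
         + ((((k+1)+1).factorial : ℝ) * -(((2:ℝ)^(k+1))⁻¹ * ((2*(k+1)+a+b).choose (k+1) : ℝ))) * x))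
      (fun x _ => by simp only [eval_add, eval_mul, eval_C, eval_X]), int_linear]
    rw [hch1 a b k, hch2 a b k]
    simp only [eJ, jacobiNormSq]
    rw [show (k+1)+a+((k+1)+b)+1 = 2*k+a+b+3 from by omega,
      show (k+1)+a+((k+1)+b)+2 = 2*k+a+b+4 from by omega]
    have f2 : ((2*k+a+b+2).factorial : ℝ) = (2*(k:ℝ)+a+b+2) * ((2*k+a+b+1).factorial : ℝ) := by
      rw [show 2*k+a+b+2 = (2*k+a+b+1)+1 from by omega, Nat.factorial_succ]; push_cast; ring
    have f3 : ((2*k+a+b+3).factorial : ℝ)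
        = (2*(k:ℝ)+a+b+3) * ((2*(k:ℝ)+a+b+2) * ((2*k+a+b+1).factorial : ℝ)) := by
      rw [show 2*k+a+b+3 = (2*k+a+b+1)+1+1 from by omega, Nat.factorial_succ, Nat.factorial_succ]
      push_cast; ring
    have f4 : ((2*k+a+b+4).factorial : ℝ)
        = (2*(k:ℝ)+a+b+4) * ((2*(k:ℝ)+a+b+3) * ((2*(k:ℝ)+a+b+2) * ((2*k+a+b+1).factorial : ℝ))) := by
      rw [show 2*k+a+b+4 = (2*k+a+b+1)+1+1+1 from by omega, Nat.factorial_succ, Nat.factorial_succ,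
        Nat.factorial_succ]
      push_cast; ring
    have fn1 : (((k+1)+1).factorial : ℝ) = ((k:ℝ)+2) * (((k:ℝ)+1) * (k.factorial : ℝ)) := by
      rw [Nat.factorial_succ, Nat.factorial_succ]; push_cast; ring
    have fnf : ((k+1).factorial : ℝ) = ((k:ℝ)+1) * (k.factorial : ℝ) := by
      rw [Nat.factorial_succ]; push_cast; ring
    have p1 : (2:ℝ)^(2*k+a+b+3) = 2^(k+1)*(2^(k+1)*2^(a+b+1)) := by
      rw [← pow_add, ← pow_add]; congr 1; omega
    have p2 : (2:ℝ)^(2*k+a+b+4) = 2^(k+1)*(2^(k+1)*(2^(a+b+1)*2)) := by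
      rw [← pow_succ (2:ℝ) (a+b+1), ← pow_add, ← pow_add]; congr 1; omega
    rw [f4, f3, f2, fn1, fnf, p1, p2]
    have h1 : ((2:ℝ)^(k+1)) ≠ 0 := by positivity
    have h3 : ((k.factorial : ℕ):ℝ) ≠ 0 := Nat.cast_ne_zero.2 k.factorial_ne_zero
    have h4 : (((2*k+a+b+1).factorial : ℕ):ℝ) ≠ 0 := Nat.cast_ne_zero.2 (Nat.factorial_ne_zero _)
    have h5 : (((k+1+a+b).factorial : ℕ):ℝ) ≠ 0 := Nat.cast_ne_zero.2 (Nat.factorial_ne_zero _)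
    have h6 : (2*((k:ℝ)+1)+a+b) ≠ 0 := by positivity
    have h7 : (2*((k:ℝ)+1)+a+b+2) ≠ 0 := by positivity
    have h8 : (2*(k:ℝ)+a+b+2) ≠ 0 := by positivity
    have h9 : (2*(k:ℝ)+a+b+3) ≠ 0 := by positivity
    have h10 : (2*(k:ℝ)+a+b+4) ≠ 0 := by positivity
    have h11 : ((k:ℝ)+1) ≠ 0 := by positivity
    have h12 : ((k:ℝ)+2) ≠ 0 := by positivity
    push_cast
    field_simp
    ring

lemma normSq_pos (a b n : ℕ) : 0 < jacobiNormSq a b n := by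
  rw [jacobiNormSq]
  have h1 : (0:ℝ) < ((n+a).factorial : ℝ) := Nat.cast_pos.2 (Nat.factorial_pos _)
  have h2 : (0:ℝ) < ((n+b).factorial : ℝ) := Nat.cast_pos.2 (Nat.factorial_pos _)
  have h3 : (0:ℝ) < ((n+a+b).factorial : ℝ) := Nat.cast_pos.2 (Nat.factorial_pos _)
  have h4 : (0:ℝ) < (n.factorial : ℝ) := Nat.cast_pos.2 (Nat.factorial_pos _)
  have h5 : (0:ℝ) < 2*(n:ℝ)+a+b+1 := by positivity
  positivity

lemma Tsum_s8 (a b : ℕ) (r : ℕ) :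
    ∑ k ∈ Finset.range r, eJ a b k = 2*(r:ℝ)*((r:ℝ)+a)/(2*(r:ℝ)+a+b) := by
  induction r with
  | zero => simp
  | succ r ih =>
    rw [Finset.sum_range_succ, ih]
    match r with
    | 0 =>
      simp only [eJ]
      have h2 : ((a:ℝ)+b+2) ≠ 0 := by positivity
      have h3 : (2*(1:ℝ)+a+b) ≠ 0 := by positivity
      push_cast
      rw [show 2*(0:ℝ)*(0+a)/(2*0+a+b) = 0 from by rw [mul_zero, zero_mul, zero_div]]
      field_simp
      ring
    | (j+1) =>
      simp only [eJ]
      have h1 : (2*((j:ℝ)+1)+a+b) ≠ 0 := by positivity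
      have h2 : (2*((j:ℝ)+1)+a+b+2) ≠ 0 := by positivity
      have h3 : (2*((j:ℝ)+1+1)+a+b) ≠ 0 := by positivity
      push_cast
      field_simp
      ring

lemma jacobiP_cont_s8 (a b k : ℕ) : Continuous (fun x => jacobiP a b k x) := by
  have h : (fun x => jacobiP a b k x) = fun x => (Jpoly a b k).eval x := funext (jacobiP_eq a b k)
  rw [h]; exact Polynomial.continuous _

lemma S_cont (a b r : ℕ) :
    Continuous (fun x => ∑ k ∈ Finset.range r, (jacobiP a b k x)^2 / jacobiNormSq a b k) := by
  apply continuous_finset_sum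
  intro k _
  exact ((jacobiP_cont_s8 a b k).pow 2).div_const _

lemma term_cont (a b k : ℕ) :
    Continuous fun x:ℝ => (1-x)^a*(1+x)^b * ((jacobiP a b k x)^2/jacobiNormSq a b k) * (1-x) := by
  have h1 : Continuous fun x:ℝ => (1-x)^a*(1+x)^b :=
    (((continuous_const.sub continuous_id).pow a).mul ((continuous_const.add continuous_id).pow b))
  exact (h1.mul (((jacobiP_cont_s8 a b k).pow 2).div_const _)).mul (continuous_const.sub continuous_id)

lemma Gint (a b r : ℕ) :
    ∫ x in (-1:ℝ)..1, ((1-x)^a*(1+x)^b *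
        (∑ k ∈ Finset.range r, (jacobiP a b k x)^2/jacobiNormSq a b k)) * ((1-x)/(2*Real.log 2))
    = (r:ℝ)*((r:ℝ)+(a:ℝ))/((2*(r:ℝ)+(a:ℝ)+(b:ℝ)) * Real.log 2) := by
  have hterm : ∀ k, (∫ x in (-1:ℝ)..1, (1-x)^a*(1+x)^b * ((jacobiP a b k x)^2/jacobiNormSq a b k) * (1-x))
      = eJ a b k := by
    intro k
    have h1 : ∀ x:ℝ, (1-x)^a*(1+x)^b * ((jacobiP a b k x)^2/jacobiNormSq a b k) * (1-x)
        = (jacobiNormSq a b k)⁻¹ *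
            ((1-x)^a*(1+x)^b * ((Jpoly a b k).eval x * ((1-X)*Jpoly a b k).eval x)) := by
      intro x
      rw [jacobiP_eq]
      simp only [eval_mul, eval_sub, eval_one, eval_X, div_eq_mul_inv]
      ring
    rw [intervalIntegral.integral_congr (fun x _ => h1 x), intervalIntegral.integral_const_mul,
      I1_eq]
    rw [mul_comm (eJ a b k) _, inv_mul_cancel_left₀ (ne_of_gt (normSq_pos a b k))]
  have h2 : ∀ x:ℝ, ((1-x)^a*(1+x)^b *
        (∑ k ∈ Finset.range r, (jacobiP a b k x)^2/jacobiNormSq a b k)) * ((1-x)/(2*Real.log 2))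
      = (2*Real.log 2)⁻¹ *
          (∑ k ∈ Finset.range r, (1-x)^a*(1+x)^b * ((jacobiP a b k x)^2/jacobiNormSq a b k) * (1-x)) := by
    intro x
    rw [Finset.mul_sum, Finset.mul_sum, Finset.sum_mul]
    refine Finset.sum_congr rfl fun k _ => ?_
    ring
  rw [intervalIntegral.integral_congr (fun x _ => h2 x), intervalIntegral.integral_const_mul,
    intervalIntegral.integral_finset_sum (fun k _ => (term_cont a b k).intervalIntegrable _ _),
    Finset.sum_congr rfl (fun k _ => hterm k), Tsum_s8]
  have hlog : Real.log 2 ≠ 0 := ne_of_gt (Real.log_pos one_lt_two)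
  by_cases hz : 2*(r:ℝ)+(a:ℝ)+(b:ℝ) = 0
  · have hr0 : (r:ℝ) = 0 := by
      have h1 : (0:ℝ) ≤ r := Nat.cast_nonneg r
      have h2 : (0:ℝ) ≤ a := Nat.cast_nonneg a
      have h3 : (0:ℝ) ≤ b := Nat.cast_nonneg b
      linarith
    rw [hz, hr0]
    simp
  · field_simp

lemma log_est {t : ℝ} (ht : 0 ≤ t) : |Real.log (1+t) - t| ≤ t^2 := by
  have h1t : (0:ℝ) < 1 + t := by linarith
  have hub : Real.log (1+t) ≤ t := by
    have := Real.log_le_sub_one_of_pos h1t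
    linarith
  have hlb : t - t^2 ≤ Real.log (1+t) := by
    have h2 : (0:ℝ) < (1+t)⁻¹ := by positivity
    have h3 := Real.log_le_sub_one_of_pos h2
    rw [Real.log_inv] at h3
    have h4 : (1:ℝ) - (1+t)⁻¹ ≤ Real.log (1+t) := by linarith
    have h5 : (1:ℝ) - (1+t)⁻¹ = t/(1+t) := by field_simp; ring
    rw [h5] at h4
    have h6 : t - t^2 ≤ t/(1+t) := by
      rw [le_div_iff₀ h1t]
      nlinarith
    linarith
  rw [abs_le]
  constructor <;> nlinarith


noncomputable def Sfun (a b r : ℕ) (x : ℝ) : ℝ :=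
  ∑ k ∈ Finset.range r, (jacobiP a b k x)^2 / jacobiNormSq a b k

lemma Sfun_cont (a b r : ℕ) : Continuous (Sfun a b r) := by
  unfold Sfun
  apply continuous_finset_sum
  intro k _
  exact ((jacobiP_cont_s8 a b k).pow 2).div_const _

lemma WS_cont (a b r : ℕ) : Continuous (fun x : ℝ => (1-x)^a*(1+x)^b*Sfun a b r x) :=
  (((continuous_const.sub continuous_id).pow a).mul
    ((continuous_const.add continuous_id).pow b)).mul (Sfun_cont a b r)


lemma capC_tendsto (a b r : ℕ) :
    Filter.Tendsto (fun ρ : ℝ => capC a b r ρ / ρ) (nhdsWithin 0 (Set.Ioi 0))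
      (nhds ((r:ℝ)*((r:ℝ)+(a:ℝ))/((2*(r:ℝ)+(a:ℝ)+(b:ℝ)) * Real.log 2))) := by
  have hlog2 : (0:ℝ) < Real.log 2 := Real.log_pos one_lt_two
  obtain ⟨M, hM⟩ := (isCompact_Icc : IsCompact (Set.Icc (-1:ℝ) 1)).exists_bound_of_continuousOn
    (WS_cont a b r).continuousOn
  set L : ℝ := (r:ℝ)*((r:ℝ)+(a:ℝ))/((2*(r:ℝ)+(a:ℝ)+(b:ℝ)) * Real.log 2) with hLdef
  have hGL : (∫ x in (-1:ℝ)..1, ((1-x)^a*(1+x)^b*Sfun a b r x) * ((1-x)/(2*Real.log 2))) = L := by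
    have := Gint a b r
    simp only [Sfun]
    exact this
  have hdiff : ∀ ρ : ℝ, 0 < ρ → |capC a b r ρ/ρ - L| ≤ ρ * (2*M/Real.log 2) := by
    intro ρ hρ
    have hlogcont : ContinuousOn (fun x : ℝ => Real.logb 2 (1+ρ*(1-x)/2)) (Set.uIcc (-1:ℝ) 1) := by
      apply ContinuousOn.div_const
      apply ContinuousOn.log
      · fun_prop
      · intro x hx
        rw [Set.uIcc_of_le (by norm_num : (-1:ℝ) ≤ 1)] at hx
        have h1 : 0 ≤ 1 - x := by linarith [hx.2]
        have h2 : 0 ≤ ρ*(1-x)/2 := by positivity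
        intro hzero
        linarith
    have hint1 : IntervalIntegrable
        (fun x => ((1-x)^a*(1+x)^b*Sfun a b r x) * (Real.logb 2 (1+ρ*(1-x)/2)/ρ)) volume (-1) 1 :=
      ((WS_cont a b r).continuousOn.mul (hlogcont.div_const ρ)).intervalIntegrable
    have hint2 : IntervalIntegrable
        (fun x => ((1-x)^a*(1+x)^b*Sfun a b r x) * ((1-x)/(2*Real.log 2))) volume (-1) 1 :=
      ((WS_cont a b r).mul ((continuous_const.sub continuous_id).div_const _)).intervalIntegrable _ _
    have hcap : capC a b r ρ/ρ
        = ∫ x in (-1:ℝ)..1, ((1-x)^a*(1+x)^b*Sfun a b r x) * (Real.logb 2 (1+ρ*(1-x)/2)/ρ) := by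
      rw [capC, ← intervalIntegral.integral_div]
      refine intervalIntegral.integral_congr fun x _ => ?_
      simp only [Sfun]
      ring
    have hde : capC a b r ρ/ρ - L = ∫ x in (-1:ℝ)..1, ((1-x)^a*(1+x)^b*Sfun a b r x) *
        (Real.logb 2 (1+ρ*(1-x)/2)/ρ - (1-x)/(2*Real.log 2)) := by
      rw [hcap, ← hGL, ← intervalIntegral.integral_sub hint1 hint2]
      refine intervalIntegral.integral_congr fun x _ => ?_
      ring
    rw [hde]
    have hbd : ∀ x ∈ Set.uIoc (-1:ℝ) 1, ‖((1-x)^a*(1+x)^b*Sfun a b r x) *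
        (Real.logb 2 (1+ρ*(1-x)/2)/ρ - (1-x)/(2*Real.log 2))‖ ≤ M*(ρ/Real.log 2) := by
      intro x hx
      rw [Set.uIoc_of_le (by norm_num : (-1:ℝ) ≤ 1)] at hx
      obtain ⟨hx1, hx2⟩ := hx
      have h1x : 0 ≤ 1 - x := by linarith
      have h2x : 1 - x ≤ 2 := by linarith
      have ht0 : 0 ≤ ρ*(1-x)/2 := by positivity
      have htρ : ρ*(1-x)/2 ≤ ρ := by nlinarith
      have hD : Real.logb 2 (1+ρ*(1-x)/2)/ρ - (1-x)/(2*Real.log 2)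
          = (Real.log (1+ρ*(1-x)/2) - ρ*(1-x)/2)/(ρ*Real.log 2) := by
        rw [Real.logb]
        field_simp
      rw [Real.norm_eq_abs, abs_mul, hD, abs_div]
      have hnum : |Real.log (1+ρ*(1-x)/2) - ρ*(1-x)/2| ≤ (ρ*(1-x)/2)^2 := log_est ht0
      have hden : |ρ*Real.log 2| = ρ*Real.log 2 := abs_of_pos (by positivity)
      have hMx : |(1-x)^a*(1+x)^b*Sfun a b r x| ≤ M := hM x ⟨le_of_lt hx1, hx2⟩
      have hM0 : (0:ℝ) ≤ M := le_trans (abs_nonneg _) hMx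
      have hfrac : |Real.log (1+ρ*(1-x)/2) - ρ*(1-x)/2|/|ρ*Real.log 2| ≤ ρ/Real.log 2 := by
        rw [hden, div_le_div_iff₀ (by positivity) hlog2]
        calc |Real.log (1+ρ*(1-x)/2) - ρ*(1-x)/2| * Real.log 2
            ≤ (ρ*(1-x)/2)^2 * Real.log 2 := by
              exact mul_le_mul_of_nonneg_right hnum (le_of_lt hlog2)
          _ ≤ ρ * (ρ*Real.log 2) := by
              have hsq : (ρ*(1-x)/2)^2 ≤ ρ^2 := by nlinarith
              nlinarith
      exact mul_le_mul hMx hfrac (div_nonneg (abs_nonneg _) (abs_nonneg _)) hM0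
    calc ‖∫ x in (-1:ℝ)..1, ((1-x)^a*(1+x)^b*Sfun a b r x) *
            (Real.logb 2 (1+ρ*(1-x)/2)/ρ - (1-x)/(2*Real.log 2))‖
        ≤ M*(ρ/Real.log 2) * |1 - (-1:ℝ)| :=
          intervalIntegral.norm_integral_le_of_norm_le_const hbd
      _ = ρ * (2*M/Real.log 2) := by
          rw [show |1 - (-1:ℝ)| = 2 from by norm_num]
          ring
  have hten : Filter.Tendsto (fun ρ : ℝ => ρ * (2*M/Real.log 2)) (nhdsWithin 0 (Set.Ioi 0)) (nhds 0) := by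
    have h := (continuous_id.mul (continuous_const : Continuous fun _:ℝ => 2*M/Real.log 2)).tendsto (0:ℝ)
    simp only [Pi.mul_apply, id_eq, zero_mul] at h
    exact h.mono_left nhdsWithin_le_nhds
  have hkey : Filter.Tendsto (fun ρ => capC a b r ρ/ρ - L) (nhdsWithin 0 (Set.Ioi 0)) (nhds 0) := by
    apply squeeze_zero_norm' ?_ hten
    filter_upwards [self_mem_nhdsWithin] with ρ hρ
    rw [Real.norm_eq_abs]
    exact hdiff ρ hρ
  have hfin := hkey.add (tendsto_const_nhds (x := L) (f := nhdsWithin (0:ℝ) (Set.Ioi 0)))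
  simp only [sub_add_cancel, zero_add] at hfin
  exact hfin

lemma logb_tendsto : Filter.Tendsto (fun ρ : ℝ => Real.logb 2 (1+ρ)/ρ) (nhdsWithin 0 (Set.Ioi 0))
    (nhds (1/Real.log 2)) := by
  have hlog2 : (0:ℝ) < Real.log 2 := Real.log_pos one_lt_two
  have h1 : Filter.Tendsto (fun ρ:ℝ => Real.log (1+ρ)/ρ) (nhdsWithin 0 (Set.Ioi 0)) (nhds 1) := by
    have hkey : Filter.Tendsto (fun ρ:ℝ => Real.log (1+ρ)/ρ - 1) (nhdsWithin 0 (Set.Ioi 0)) (nhds 0) := by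
      have htend : Filter.Tendsto (fun ρ:ℝ => ρ) (nhdsWithin 0 (Set.Ioi 0)) (nhds 0) :=
        tendsto_id.mono_left nhdsWithin_le_nhds
      apply squeeze_zero_norm' ?_ htend
      filter_upwards [self_mem_nhdsWithin] with ρ (hρ : 0 < ρ)
      rw [Real.norm_eq_abs, show Real.log (1+ρ)/ρ - 1 = (Real.log (1+ρ) - ρ)/ρ from by
        field_simp, abs_div, abs_of_pos hρ]
      rw [div_le_iff₀ hρ]
      have := log_est (le_of_lt hρ)
      nlinarith
    have := hkey.add (tendsto_const_nhds (x := (1:ℝ)) (f := nhdsWithin (0:ℝ) (Set.Ioi 0)))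
    simp only [sub_add_cancel, zero_add] at this
    exact this
  have h2 := h1.div_const (Real.log 2)
  refine h2.congr fun ρ => ?_
  rw [Real.logb]
  ring

end JacobiAux

open Filter Topology in
/-- Lemma 2 (case `m_r + m_t > m`): with
`C(ρ) = (m_t + m_r - m) log₂(1+ρ) + C'(ρ)` where `C'` is the capacity integral
for the reduced parameters `a' = |m_r - m_t|`, `b' = m_r + m_t - m`,
`r' = min(m - m_r, m - m_t)`, one has `lim_{ρ→0⁺} C(ρ)/ρ = m_r m_t / (m ln 2)`. -/
theorem low_snr_capacity_of_gt (m mt mr a' b' r' : ℕ)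
    (hm : 0 < m) (hmt : 0 < mt) (hmr : 0 < mr)
    (hmt' : mt ≤ m) (hmr' : mr ≤ m) (hsum : m < mr + mt)
    (ha : (a' : ℤ) = |(mr : ℤ) - (mt : ℤ)|) (hb : b' = mr + mt - m)
    (hrdef : r' = min (m - mr) (m - mt)) :
    Tendsto
      (fun ρ : ℝ =>
        (((mt + mr - m : ℕ) : ℝ) * Real.logb 2 (1 + ρ) + capC a' b' r' ρ) / ρ)
      (𝓝[>] (0 : ℝ)) (𝓝 ((mr : ℝ) * (mt : ℝ) / ((m : ℝ) * Real.log 2))) := by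
  classical

  have hlog2 : (0:ℝ) < Real.log 2 := Real.log_pos one_lt_two
  have hcomb := (((logb_tendsto).const_mul (((mt + mr - m : ℕ) : ℝ))).add (capC_tendsto a' b' r'))
  have heq : (fun ρ : ℝ =>
      (((mt + mr - m : ℕ) : ℝ) * Real.logb 2 (1 + ρ) + capC a' b' r' ρ) / ρ)
      = fun ρ : ℝ => ((mt + mr - m : ℕ) : ℝ) * (Real.logb 2 (1+ρ)/ρ) + capC a' b' r' ρ / ρ := by
    funext ρ
    rw [add_div, mul_div_assoc]
  rw [heq]
  convert hcomb using 2
  -- value identity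
  have ha' : (a' : ℤ) = (mr : ℤ) - mt ∨ (a' : ℤ) = (mt : ℤ) - mr := by
    rcases abs_cases ((mr:ℤ) - (mt:ℤ)) with ⟨h1, _⟩ | ⟨h1, _⟩
    · left; rw [ha, h1]
    · right; rw [ha, h1]; ring
  have hcast : ((mt + mr - m : ℕ) : ℝ) = (mt:ℝ) + mr - m := by
    have : m ≤ mt + mr := by omega
    push_cast [Nat.cast_sub this]
    ring
  rcases ha' with h | h
  · -- mt ≤ mr
    have e1 : 2*r' + a' + b' = m := by omega
    have e2 : r' + a' + mt = m := by omega
    have e3 : r' + mr = m := by omega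
    have E1 : 2*(r':ℝ) + a' + b' = m := by exact_mod_cast congrArg (Nat.cast (R := ℝ)) e1
    have E2 : (a':ℝ) = (mr:ℝ) - mt := by exact_mod_cast h
    have E3 : (r':ℝ) = (m:ℝ) - mr := by
      have := congrArg (Nat.cast (R := ℝ)) e3
      push_cast at this
      linarith
    rw [hcast, E1, E2, E3]
    have hm0 : ((m:ℝ)) ≠ 0 := Nat.cast_ne_zero.2 (by omega)
    field_simp
    ring
  · -- mr ≤ mt
    have e1 : 2*r' + a' + b' = m := by omega
    have e3 : r' + mt = m := by omega
    have E1 : 2*(r':ℝ) + a' + b' = m := by exact_mod_cast congrArg (Nat.cast (R := ℝ)) e1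
    have E2 : (a':ℝ) = (mt:ℝ) - mr := by exact_mod_cast h
    have E3 : (r':ℝ) = (m:ℝ) - mt := by
      have := congrArg (Nat.cast (R := ℝ)) e3
      push_cast at this
      linarith
    rw [hcast, E1, E2, E3]
    have hm0 : ((m:ℝ)) ≠ 0 := Nat.cast_ne_zero.2 (by omega)
    field_simp
    ring
end
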